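/- arXiv:2605.15987 — 3 statements merged into one kernel-verified Lean document; each statement's English description precedes it below -/
import Mathlib

section
/- A ½-Hölder curve whose dyadic approximations all have zero area but whose signed area does not exist: there exist a constant C > 0 and a continuous curve γ : [0,1] → ℝ² with |γ(s) − γ(t)| ≤ C √|s − t| for all s, t ∈ [0,1], such that A_{𝒫_k}(γ) = 0 for every integer k ≥ 0, and yet the signed area A(γ) does not exist, i.e., there is no L ∈ ℝ such that for every ε > 0 there is δ > 0 with |A_P(γ) − L| < ε for all partitions P of mesh less than δ. -/
/-!
Write `e x = exp (2πix)` and `f t = ∑ₖ 2⁻ᵏ (e (4ᵏ t) - 1)`. The `k`-th term of this lacunary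
series has size `2⁻ᵏ` and Lipschitz constant `2π 2ᵏ`, so `f` is ½-Hölder, and so is the closed
curve `γ` equal to `f (2t)` on `[0, 1/2]` and to `-f (2 - 2t)` on `[1/2, 1]`.

Since `γ (1 - t) = -γ t`, reversing a symmetric partition negates its area: every dyadic area
vanishes, so a signed area of `γ` would have to be `0`.

At a dyadic point of level `m` only the terms of `f` with `4ᵏ < 2ᵐ` survive, and orthogonality
of the characters `j ↦ e (c j / 2ᵐ)` evaluates twice the area of the dyadic polygon of `f`,
`D m = 2ᵐ ∑_{4ᵏ < 2ᵐ} 4⁻ᵏ sin (2π 4ᵏ / 2ᵐ)` (`lacunaryArea m`); hence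
`D (m + 2) - D m = 2ᵐ⁺² sin (2π / 2ᵐ⁺²) ≥ 4`.
The partition of `[0, 1]` that is dyadic of level `m + 1` on `[0, 1/2]` and of level `m + 2` on
`[1/2, 1]` has area `(D m - D (m + 1)) / 2`, which does not tend to `0`.
-/

open MeasureTheory Set Filter Topology
open scoped ENNReal

noncomputable section

/-- Euclidean space `ℝ^(2n)`. -/
abbrev E (n : ℕ) : Type := EuclideanSpace ℝ (Fin (2 * n))

/-- The standard symplectic form on `ℝ^(2n)` with coordinates `(x₁,y₁,…,xₙ,yₙ)`. -/
def omegaF (n : ℕ) (u v : E n) : ℝ :=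
  ∑ i : Fin n,
    (u ⟨2 * i.1, by have := i.isLt; omega⟩ * v ⟨2 * i.1 + 1, by have := i.isLt; omega⟩
     - v ⟨2 * i.1, by have := i.isLt; omega⟩ * u ⟨2 * i.1 + 1, by have := i.isLt; omega⟩)

/-- The discrete symplectic area `Ŝ(γ_P)` of `γ` along the partition
`t 0 < t 1 < … < t k`:  `½ ∑_i ω(γ(t_i), γ(t_{i+1}))`, which coincides with
`½ ∑_i ∑_j (x_j(γ(t_i)) y_j(γ(t_{i+1})) − y_j(γ(t_i)) x_j(γ(t_{i+1})))`. -/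
def SHat (n : ℕ) (γ : ℝ → E n) (k : ℕ) (t : Fin (k + 1) → ℝ) : ℝ :=
  (1 / 2) * ∑ i : Fin k, omegaF n (γ (t i.castSucc)) (γ (t i.succ))

/-- The symplectic area of `γ : [a,b] → ℝ^(2n)` exists and equals `L`: for every `ε > 0`
there is `δ > 0` such that every partition `a = t₀ < … < t_k = b` of mesh `< δ` satisfies
`|Ŝ(γ_P) − L| < ε`. -/
def IsSympArea (n : ℕ) (a b : ℝ) (γ : ℝ → E n) (L : ℝ) : Prop :=
  ∀ ε > (0 : ℝ), ∃ δ > (0 : ℝ), ∀ (k : ℕ) (t : Fin (k + 1) → ℝ),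
    t 0 = a → t (Fin.last k) = b →
    (∀ i : Fin k, t i.castSucc < t i.succ) →
    (∀ i : Fin k, t i.succ - t i.castSucc < δ) →
    |SHat n γ k t - L| < ε

/-- `δ_{i,j}(γ)`: the diameter of `{γ(j 2^{-i}), γ((2j+1) 2^{-i-1}), γ((j+1) 2^{-i})}`. -/
def dyadDelta (n : ℕ) (γ : ℝ → E n) (i j : ℕ) : ℝ :=
  Metric.diam
    ({γ ((j : ℝ) / 2 ^ i), γ ((2 * (j : ℝ) + 1) / 2 ^ (i + 1)), γ (((j : ℝ) + 1) / 2 ^ i)} :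
      Set (E n))


/-- The discrete signed area `A_{𝒫_i}(γ)` of `γ : [0,1] → ℝ²` along the `i`-th dyadic
partition `𝒫_i = {j 2^{-i} : 0 ≤ j ≤ 2^i}`. -/
def dyadArea (γ : ℝ → E 1) (i : ℕ) : ℝ :=
  (1 / 2) * ∑ j ∈ Finset.range (2 ^ i),
    omegaF 1 (γ ((j : ℝ) / 2 ^ i)) (γ (((j : ℝ) + 1) / 2 ^ i))

open Complex Finset
open scoped Real

theorem omegaF_swap (n : ℕ) (u v : E n) : omegaF n v u = -omegaF n u v := by
  simp only [omegaF, ← Finset.sum_neg_distrib]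
  congr 1; ext i; ring

theorem omegaF_neg_neg (n : ℕ) (u v : E n) : omegaF n (-u) (-v) = omegaF n u v := by
  simp [omegaF]

theorem omegaF_repr_repr (p q : ℂ) :
    omegaF 1 (orthonormalBasisOneI.repr p) (orthonormalBasisOneI.repr q) =
      (starRingEnd ℂ p * q).im := by
  simp [omegaF, Complex.mul_im]
  ring

def polygonArea (n : ℕ) (γ : ℝ → E n) (k : ℕ) (p : ℕ → ℝ) : ℝ :=
  (1 / 2) * ∑ i ∈ range k, omegaF n (γ (p i)) (γ (p (i + 1)))

theorem SHat_eq_polygonArea (n : ℕ) (γ : ℝ → E n) (k : ℕ) (p : ℕ → ℝ) :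
    SHat n γ k (fun i => p i) = polygonArea n γ k p := by
  rw [SHat, polygonArea,
    ← Fin.sum_univ_eq_sum_range (fun i => omegaF n (γ (p i)) (γ (p (i + 1))))]
  simp

theorem IsSympArea.tendsto_polygonArea {n : ℕ} {a b : ℝ} {γ : ℝ → E n} {L : ℝ}
    (h : IsSympArea n a b γ L) {k : ℕ → ℕ} {p : ℕ → ℕ → ℝ} {δ : ℕ → ℝ}
    (h0 : ∀ m, p m 0 = a) (h1 : ∀ m, p m (k m) = b)
    (hlt : ∀ m, ∀ i < k m, p m i < p m (i + 1))
    (hmesh : ∀ m, ∀ i < k m, p m (i + 1) - p m i ≤ δ m) (hδ : Tendsto δ atTop (𝓝 0)) :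
    Tendsto (fun m => polygonArea n γ (k m) (p m)) atTop (𝓝 L) := by
  refine Metric.tendsto_nhds.2 fun ε hε => ?_
  obtain ⟨η, hη, hL⟩ := h ε hε
  filter_upwards [hδ.eventually (gt_mem_nhds hη)] with m hm
  rw [Real.dist_eq, ← SHat_eq_polygonArea]
  refine hL (k m) _ (h0 m) (h1 m) (fun i => ?_) (fun i => ?_)
  · simpa using hlt m i i.isLt
  · simpa using (hmesh m i i.isLt).trans_lt hm

theorem sum_omegaF_reflect {n : ℕ} {γ : ℝ → E n} (hγ : ∀ t, γ (1 - t) = -γ t) {N : ℕ}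
    {p q : ℕ → ℝ} (hpq : ∀ j ≤ N, q (N - j) = 1 - p j) :
    ∑ j ∈ range N, omegaF n (γ (q j)) (γ (q (j + 1))) =
      -∑ j ∈ range N, omegaF n (γ (p j)) (γ (p (j + 1))) := by
  rw [← sum_range_reflect, ← sum_neg_distrib]
  refine sum_congr rfl fun j hj => ?_
  have hj : j < N := mem_range.1 hj
  rw [show N - 1 - j = N - (j + 1) by omega, show N - (j + 1) + 1 = N - j by omega,
    hpq _ hj, hpq _ hj.le, hγ, hγ, omegaF_neg_neg, omegaF_swap]

theorem dyadArea_eq_zero_of_map_one_sub {γ : ℝ → E 1} (hγ : ∀ t, γ (1 - t) = -γ t) (k : ℕ) :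
    dyadArea γ k = 0 := by
  have h := sum_omegaF_reflect hγ (N := 2 ^ k) (p := fun j => j / 2 ^ k)
    (q := fun j => j / 2 ^ k) fun j hj => by push_cast [hj]; field_simp
  simp only [Nat.cast_add, Nat.cast_one] at h
  rw [dyadArea, self_eq_neg.1 h, mul_zero]

/-- The partition of `[0, 1]` into `3 * 2 ^ m` steps, of length `2^{-(m+1)}` on `[0, 1/2]` and
`2^{-(m+2)}` on `[1/2, 1]`. -/
def mixedDyadic (m i : ℕ) : ℝ := min (i / 2 ^ (m + 1)) ((i + 2 ^ m) / 2 ^ (m + 2))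

theorem mixedDyadic_of_le {m i : ℕ} (hi : i ≤ 2 ^ m) : mixedDyadic m i = i / 2 ^ (m + 1) := by
  refine min_eq_left ?_
  rw [div_le_div_iff₀ (by positivity) (by positivity), pow_succ, pow_succ]
  have : (i : ℝ) ≤ 2 ^ m := by exact_mod_cast hi
  nlinarith

theorem mixedDyadic_of_ge {m i : ℕ} (hi : 2 ^ m ≤ i) :
    mixedDyadic m i = (i + 2 ^ m) / 2 ^ (m + 2) := by
  refine min_eq_right ?_
  rw [div_le_div_iff₀ (by positivity) (by positivity), pow_add, pow_add]
  have : (2 : ℝ) ^ m ≤ i := by exact_mod_cast hi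
  nlinarith [mul_le_mul_of_nonneg_left this (by positivity : (0 : ℝ) ≤ 2 ^ m)]

theorem mixedDyadic_lt_succ (m i : ℕ) : mixedDyadic m i < mixedDyadic m (i + 1) := by
  unfold mixedDyadic
  push_cast
  exact min_lt_min (by gcongr; linarith) (by gcongr; linarith)

theorem mixedDyadic_succ_sub_le (m i : ℕ) :
    mixedDyadic m (i + 1) - mixedDyadic m i ≤ 2⁻¹ ^ m := by
  have hle : ∀ k ≥ m, (1 : ℝ) / 2 ^ k ≤ 2⁻¹ ^ m := fun k hk => by
    rw [inv_pow, ← one_div]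
    exact one_div_le_one_div_of_le (by positivity) (pow_le_pow_right₀ (by norm_num) hk)
  have hstep : mixedDyadic m (i + 1) ≤ mixedDyadic m i + 2⁻¹ ^ m := by
    rw [mixedDyadic, mixedDyadic, ← min_add_add_right]
    push_cast
    refine min_le_min ?_ ?_
    · rw [add_div]; linarith [hle (m + 1) (by omega)]
    · rw [add_right_comm, add_div]; linarith [hle (m + 2) (by omega)]
  linarith

def halfDyadicSum (n : ℕ) (γ : ℝ → E n) (m : ℕ) : ℝ :=
  ∑ j ∈ range (2 ^ m), omegaF n (γ (j / 2 ^ (m + 1))) (γ ((j + 1) / 2 ^ (m + 1)))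

theorem polygonArea_mixedDyadic {n : ℕ} {γ : ℝ → E n} (hγ : ∀ t, γ (1 - t) = -γ t) (m : ℕ) :
    polygonArea n γ (3 * 2 ^ m) (mixedDyadic m) =
      (1 / 2) * (halfDyadicSum n γ m - halfDyadicSum n γ (m + 1)) := by
  have hright := sum_omegaF_reflect hγ (N := 2 ^ (m + 1)) (p := fun j => j / 2 ^ (m + 2))
    (q := fun j => mixedDyadic m (2 ^ m + j)) fun j hj => by
      rw [mixedDyadic_of_ge (by omega)]
      push_cast [hj]
      field_simp
      ring
  rw [polygonArea, halfDyadicSum, halfDyadicSum, show 3 * 2 ^ m = 2 ^ m + 2 ^ (m + 1) by ring,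
    sum_range_add]
  simp only [Nat.cast_add, Nat.cast_one, ← add_assoc] at hright
  rw [hright, sub_eq_add_neg]
  congr 2
  refine sum_congr rfl fun j hj => ?_
  have hj : j < 2 ^ m := Finset.mem_range.1 hj
  rw [mixedDyadic_of_le hj.le, mixedDyadic_of_le hj]
  push_cast
  rfl

theorem mixedDyadic_zero (m : ℕ) : mixedDyadic m 0 = 0 := by
  simp [mixedDyadic_of_le (Nat.zero_le _)]

theorem mixedDyadic_three_mul_two_pow (m : ℕ) : mixedDyadic m (3 * 2 ^ m) = 1 := by
  rw [mixedDyadic_of_ge (by omega)]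
  push_cast
  rw [div_eq_one_iff_eq (by positivity), pow_add]
  ring

theorem IsSympArea.tendsto_dyadArea {γ : ℝ → E 1} {L : ℝ} (h : IsSympArea 1 0 1 γ L) :
    Tendsto (dyadArea γ) atTop (𝓝 L) := by
  refine (h.tendsto_polygonArea (k := fun m => 2 ^ m) (p := fun m i => i / 2 ^ m)
    (fun m => by simp) (fun m => by simp) (fun m i _ => by gcongr; simp)
    (fun m i _ => by push_cast; rw [← sub_div, add_sub_cancel_left, one_div, inv_pow])
    (tendsto_pow_atTop_nhds_zero_of_lt_one (by norm_num) (by norm_num))).congr fun m => ?_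
  rw [polygonArea, dyadArea]
  push_cast
  rfl

theorem IsSympArea.tendsto_polygonArea_mixedDyadic {n : ℕ} {γ : ℝ → E n} {L : ℝ}
    (h : IsSympArea n 0 1 γ L) :
    Tendsto (fun m => polygonArea n γ (3 * 2 ^ m) (mixedDyadic m)) atTop (𝓝 L) :=
  h.tendsto_polygonArea mixedDyadic_zero mixedDyadic_three_mul_two_pow
    (fun m i _ => mixedDyadic_lt_succ m i) (fun m i _ => mixedDyadic_succ_sub_le m i)
    (tendsto_pow_atTop_nhds_zero_of_lt_one (by norm_num) (by norm_num))

section HolderSeries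

variable {V : Type*} [NormedAddCommGroup V] {φ : ℕ → ℝ → V} {A B : ℝ}

theorem norm_tsum_sub_tsum_le (hφ : ∀ t, Summable fun k => φ k t)
    (hA : ∀ k s t, ‖φ k s - φ k t‖ ≤ A * 2 ^ k * |s - t|)
    (hB : ∀ k s t, ‖φ k s - φ k t‖ ≤ B * 2⁻¹ ^ k) (s t : ℝ) (K : ℕ) :
    ‖∑' k, φ k s - ∑' k, φ k t‖ ≤ A * (2 ^ K - 1) * |s - t| + 2 * B * 2⁻¹ ^ K := by
  have hgeom := summable_geometric_of_lt_one (by norm_num : (0 : ℝ) ≤ 2⁻¹) (by norm_num)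
  have hd : Summable fun k => ‖φ k s - φ k t‖ :=
    .of_nonneg_of_le (fun _ => norm_nonneg _) (fun k => hB k s t) (hgeom.mul_left B)
  have hhead : ∑ k ∈ range K, ‖φ k s - φ k t‖ ≤ A * (2 ^ K - 1) * |s - t| := by
    calc ∑ k ∈ range K, ‖φ k s - φ k t‖ ≤ ∑ k ∈ range K, A * 2 ^ k * |s - t| :=
          sum_le_sum fun k _ => hA k s t
      _ = A * (2 ^ K - 1) * |s - t| := by
          rw [← sum_mul, ← mul_sum, ← geom_sum_mul]; norm_num
  have htail : ∑' k, ‖φ (k + K) s - φ (k + K) t‖ ≤ 2 * B * 2⁻¹ ^ K := by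
    calc ∑' k, ‖φ (k + K) s - φ (k + K) t‖ ≤ ∑' k, B * 2⁻¹ ^ K * 2⁻¹ ^ k :=
          (hd.comp_injective (add_left_injective K)).tsum_le_tsum
            (fun k => (hB _ s t).trans_eq (by ring)) (hgeom.mul_left _)
      _ = 2 * B * 2⁻¹ ^ K := by rw [tsum_mul_left, tsum_geometric_inv_two]; ring
  calc ‖∑' k, φ k s - ∑' k, φ k t‖ = ‖∑' k, (φ k s - φ k t)‖ := by
        rw [(hφ s).tsum_sub (hφ t)]
    _ ≤ ∑' k, ‖φ k s - φ k t‖ := norm_tsum_le_tsum_norm hd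
    _ ≤ _ := by rw [← hd.sum_add_tsum_nat_add K]; exact add_le_add hhead htail

/-- Amplitudes `2⁻ᵏ` against Lipschitz constants `2ᵏ`: the two regimes balance at
`2⁻ᵏ ≈ √|s - t|`, which gives the exponent `1/2`. -/
theorem norm_tsum_sub_tsum_le_sqrt (hφ : ∀ t, Summable fun k => φ k t)
    (hA : ∀ k s t, ‖φ k s - φ k t‖ ≤ A * 2 ^ k * |s - t|)
    (hB : ∀ k s t, ‖φ k s - φ k t‖ ≤ B * 2⁻¹ ^ k) (s t : ℝ) :
    ‖∑' k, φ k s - ∑' k, φ k t‖ ≤ (2 * A + 2 * B) * √|s - t| := by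
  have hA0 : 0 ≤ A := by simpa using (norm_nonneg _).trans (hA 0 1 0)
  have hB0 : 0 ≤ B := by simpa using (norm_nonneg _).trans (hB 0 s t)
  have hsplit := norm_tsum_sub_tsum_le hφ hA hB s t
  rcases (abs_nonneg (s - t)).eq_or_lt with h0 | hpos
  · obtain rfl : s = t := sub_eq_zero.1 (abs_eq_zero.1 h0.symm)
    simp
  have hsq : √|s - t| * √|s - t| = |s - t| := Real.mul_self_sqrt hpos.le
  rcases le_or_gt 1 |s - t| with h1 | h1
  · have : 1 ≤ √|s - t| := Real.one_le_sqrt.2 h1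
    specialize hsplit 0
    norm_num at hsplit
    nlinarith
  obtain ⟨K, hlt, hle⟩ := exists_nat_pow_near_of_lt_one (Real.sqrt_pos.2 hpos)
    (Real.sqrt_le_one.2 h1.le) (by norm_num : (0 : ℝ) < 2⁻¹) (by norm_num)
  have hK : √|s - t| * 2 ^ K ≤ 1 := by
    calc √|s - t| * 2 ^ K ≤ 2⁻¹ ^ K * 2 ^ K := mul_le_mul_of_nonneg_right hle (by positivity)
      _ = 1 := by rw [← mul_pow]; norm_num
  have hhead : A * (2 ^ (K + 1) - 1) * |s - t| ≤ 2 * A * √|s - t| := by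
    have : (2 ^ (K + 1) - 1) * |s - t| ≤ 2 * √|s - t| :=
      calc (2 ^ (K + 1) - 1) * |s - t| ≤ 2 ^ (K + 1) * |s - t| := by linarith
        _ = 2 * √|s - t| * (√|s - t| * 2 ^ K) := by linear_combination (-2 * 2 ^ K) * hsq
        _ ≤ 2 * √|s - t| := mul_le_of_le_one_right (by positivity) hK
    nlinarith
  have htail : 2 * B * 2⁻¹ ^ (K + 1) ≤ 2 * B * √|s - t| :=
    mul_le_mul_of_nonneg_left hlt.le (by positivity)
  linarith [hsplit (K + 1)]

end HolderSeries

theorem norm_sub_le_of_halves {V : Type*} [NormedAddCommGroup V] {F : ℝ → V} {c C : ℝ}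
    (hl : ∀ s ≤ c, ∀ t ≤ c, ‖F s - F t‖ ≤ C * √|s - t|)
    (hr : ∀ s ≥ c, ∀ t ≥ c, ‖F s - F t‖ ≤ C * √|s - t|) (s t : ℝ) :
    ‖F s - F t‖ ≤ 2 * C * √|s - t| := by
  have hC : 0 ≤ C := by simpa using (norm_nonneg _).trans (hl (c - 1) (by linarith) c le_rfl)
  wlog hst : s ≤ t generalizing s t
  · rw [norm_sub_rev, abs_sub_comm]; exact this t s (le_of_not_ge hst)
  have hmono : ∀ x y, |x - y| ≤ |s - t| → C * √|x - y| ≤ C * √|s - t| := fun x y hxy =>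
    mul_le_mul_of_nonneg_left (Real.sqrt_le_sqrt hxy) hC
  have hpos : 0 ≤ C * √|s - t| := by positivity
  rcases le_total t c with htc | hct
  · linarith [hl s (hst.trans htc) t htc]
  rcases le_total c s with hcs | hsc
  · linarith [hr s hcs t hct]
  have hsc' : |s - c| ≤ |s - t| := by
    rw [abs_sub_comm, abs_sub_comm s, abs_of_nonneg (by linarith), abs_of_nonneg (by linarith)]
    linarith
  have hct' : |c - t| ≤ |s - t| := by
    rw [abs_sub_comm, abs_sub_comm s, abs_of_nonneg (by linarith), abs_of_nonneg (by linarith)]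
    linarith
  calc ‖F s - F t‖ ≤ ‖F s - F c‖ + ‖F c - F t‖ := norm_sub_le_norm_sub_add_norm_sub _ _ _
    _ ≤ C * √|s - c| + C * √|c - t| := add_le_add (hl s hsc c le_rfl) (hr c le_rfl t hct)
    _ ≤ 2 * C * √|s - t| := by linarith [hmono _ _ hsc', hmono _ _ hct']

theorem continuous_of_norm_sub_le_sqrt {V : Type*} [NormedAddCommGroup V] {F : ℝ → V} {C : ℝ}
    (hF : ∀ s t, ‖F s - F t‖ ≤ C * √|s - t|) : Continuous F := by
  refine continuous_iff_continuousAt.2 fun t => tendsto_iff_norm_sub_tendsto_zero.2 <|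
    squeeze_zero (fun _ => norm_nonneg _) (fun s => hF s t) ?_
  have : Continuous fun s => C * √|s - t| := by fun_prop
  simpa using this.tendsto t

theorem four_le_mul_sin_two_pi_div {x : ℝ} (hx : 4 ≤ x) : 4 ≤ x * Real.sin (2 * π / x) := by
  have hθ := Real.mul_le_sin (x := 2 * π / x) (by positivity)
    (by rw [div_le_div_iff₀ (by positivity) two_pos]; nlinarith [Real.pi_pos])
  calc (4 : ℝ) = x * (2 / π * (2 * π / x)) := by field_simp; ring
    _ ≤ x * Real.sin (2 * π / x) := mul_le_mul_of_nonneg_left hθ (by positivity)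

namespace LacunaryCurve

def e (x : ℝ) : ℂ := exp (2 * π * x * I)

theorem e_zero : e 0 = 1 := by simp [e]

theorem e_add (x y : ℝ) : e (x + y) = e x * e y := by
  rw [e, e, e, ← Complex.exp_add]; push_cast; ring_nf

theorem e_intCast (n : ℤ) : e n = 1 := by
  rw [e, ← exp_int_mul_two_pi_mul_I n]; push_cast; ring_nf

theorem e_pow (x : ℝ) (j : ℕ) : e x ^ j = e (j * x) := by
  rw [e, e, ← Complex.exp_nat_mul]; push_cast; ring_nf

theorem conj_e (x : ℝ) : starRingEnd ℂ (e x) = e (-x) := by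
  rw [e, e, ← Complex.exp_conj]; simp [map_ofNat]

theorem norm_e (x : ℝ) : ‖e x‖ = 1 := by
  rw [e, show (2 * π * x * I : ℂ) = ((2 * π * x : ℝ) : ℂ) * I by push_cast; ring]
  exact norm_exp_ofReal_mul_I _

theorem e_im (x : ℝ) : (e x).im = Real.sin (2 * π * x) := by
  rw [e, show (2 * π * x * I : ℂ) = ((2 * π * x : ℝ) : ℂ) * I by push_cast; ring]
  exact exp_ofReal_mul_I_im _

theorem norm_e_sub_e_le (x y : ℝ) : ‖e x - e y‖ ≤ 2 * π * |x - y| := by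
  have h : e x - e y = e y * (exp (I * (2 * π * (x - y) : ℝ)) - 1) := by
    rw [mul_sub, mul_one, e, e, ← Complex.exp_add]; push_cast; ring_nf
  rw [h, norm_mul, norm_e, one_mul]
  refine Real.norm_exp_I_mul_ofReal_sub_one_le.trans_eq ?_
  rw [Real.norm_eq_abs, abs_mul, abs_of_pos Real.two_pi_pos]

theorem e_div_ne_one {N : ℕ} (hN : N ≠ 0) {c : ℤ} (hc : ¬ (N : ℤ) ∣ c) : e (c / N) ≠ 1 := by
  intro h
  obtain ⟨d, hd⟩ := Complex.exp_eq_one_iff.1 h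
  refine hc ⟨d, ?_⟩
  have : (c : ℂ) = N * d := by
    field_simp at hd
    push_cast at hd
    field_simp at hd
    linear_combination hd
  exact_mod_cast this

theorem sum_range_e_mul_div (N : ℕ) (c : ℤ) :
    ∑ j ∈ range N, e (c * j / N) = if (N : ℤ) ∣ c then (N : ℂ) else 0 := by
  rcases Nat.eq_zero_or_pos N with rfl | hN
  · simp
  have hpow : ∀ j : ℕ, e (c * j / N) = e (c / N) ^ j := fun j => by
    rw [e_pow]; ring_nf
  simp_rw [hpow]
  split_ifs with hdvd
  · obtain ⟨d, rfl⟩ := hdvd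
    have : e ((N * d : ℤ) / N) = 1 := by
      rw [Int.cast_mul, Int.cast_natCast, mul_div_cancel_left₀ _ (by positivity)]
      exact e_intCast d
    simp only [this, one_pow, sum_const, card_range, nsmul_eq_mul, mul_one]
  · rw [geom_sum_eq (e_div_ne_one hN.ne' hdvd), e_pow, mul_div_cancel₀ _ (by positivity),
      e_intCast, sub_self, zero_div]

section TrigSum

variable {ι : Type*} (s : Finset ι) (a : ι → ℝ) (n : ι → ℤ) (N : ℕ)

def trigSum (j : ℕ) : ℂ :=
  ∑ k ∈ s, (a k : ℂ) * e (n k * j / N)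

theorem trigSum_self : trigSum s a n N N = trigSum s a n N 0 := by
  rcases eq_or_ne N 0 with rfl | hN
  · rfl
  refine sum_congr rfl fun k _ => ?_
  rw [mul_div_cancel_right₀ _ (Nat.cast_ne_zero.2 hN), e_intCast, Nat.cast_zero, mul_zero,
    zero_div, e_zero]

theorem conj_trigSum_mul_succ (j : ℕ) :
    starRingEnd ℂ (trigSum s a n N j) * trigSum s a n N (j + 1) =
      ∑ k ∈ s, ∑ l ∈ s,
        (a k * a l : ℂ) * e (n l / N) * e (((n l - n k : ℤ) : ℝ) * j / N) := by
  simp only [trigSum, map_sum, map_mul, conj_ofReal, conj_e, sum_mul_sum]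
  refine sum_congr rfl fun k _ => sum_congr rfl fun l _ => ?_
  calc _ = (a k * a l : ℂ) * (e (-(n k * j / N)) * e (n l * (j + 1 : ℕ) / N)) := by ring
    _ = (a k * a l : ℂ) * e (n l / N + ((n l - n k : ℤ) : ℝ) * j / N) := by
      rw [← e_add]; congr 2; push_cast; ring
    _ = _ := by rw [e_add]; ring

theorem sum_conj_trigSum_mul_succ (hn : ∀ k ∈ s, ∀ l ∈ s, (N : ℤ) ∣ n l - n k → k = l) :
    ∑ j ∈ range N, starRingEnd ℂ (trigSum s a n N j) * trigSum s a n N (j + 1) =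
      N * ∑ k ∈ s, (a k ^ 2 : ℝ) * e (n k / N) := by
  classical
  have horth : ∀ k ∈ s, ∀ l ∈ s,
      ∑ j ∈ range N, e (((n l - n k : ℤ) : ℝ) * j / N) = if k = l then (N : ℂ) else 0 := by
    intro k hk l hl
    rw [sum_range_e_mul_div]
    congr 1
    exact propext ⟨hn k hk l hl, fun h => h ▸ by simp⟩
  simp_rw [conj_trigSum_mul_succ]
  rw [sum_comm, mul_sum]
  refine sum_congr rfl fun k hk => ?_
  rw [sum_comm]
  simp_rw [← mul_sum]
  rw [sum_congr rfl fun l hl => by rw [horth k hk l hl]]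
  simp only [mul_ite, mul_zero, sum_ite_eq, if_pos hk]
  push_cast
  ring

theorem im_sum_conj_sub_mul_sub (Q : ℕ → ℂ) (c : ℂ) (hQ : Q N = Q 0) :
    (∑ j ∈ range N, starRingEnd ℂ (Q j - c) * (Q (j + 1) - c)).im =
      (∑ j ∈ range N, starRingEnd ℂ (Q j) * Q (j + 1)).im := by
  have hterm : ∀ j, (starRingEnd ℂ (Q j - c) * (Q (j + 1) - c)).im =
      (starRingEnd ℂ (Q j) * Q (j + 1)).im - (starRingEnd ℂ c * (Q (j + 1) - Q j)).im := by
    intro j; simp only [map_sub, mul_im, sub_re, sub_im, conj_re, conj_im]; ring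
  have htel : ∑ j ∈ range N, (starRingEnd ℂ c * (Q (j + 1) - Q j)).im = 0 := by
    rw [← im_sum, ← mul_sum, sum_range_sub, hQ, sub_self, mul_zero, zero_im]
  rw [im_sum, im_sum, sum_congr rfl fun j _ => hterm j, sum_sub_distrib, htel, sub_zero]

theorem im_sum_conj_trigSum_sub_mul (hn : ∀ k ∈ s, ∀ l ∈ s, (N : ℤ) ∣ n l - n k → k = l)
    (c : ℂ) :
    (∑ j ∈ range N,
        starRingEnd ℂ (trigSum s a n N j - c) * (trigSum s a n N (j + 1) - c)).im =
      N * ∑ k ∈ s, a k ^ 2 * Real.sin (2 * π * (n k / N)) := by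
  rw [im_sum_conj_sub_mul_sub N _ c (trigSum_self s a n N),
    sum_conj_trigSum_mul_succ s a n N hn]
  simp [im_sum, e_im, -ofReal_pow]

end TrigSum

def lacunaryTerm (k : ℕ) (t : ℝ) : ℂ := ((2⁻¹ ^ k : ℝ) : ℂ) * (e (4 ^ k * t) - 1)

def lacunary (t : ℝ) : ℂ := ∑' k, lacunaryTerm k t

theorem norm_lacunaryTerm_sub_le_mul_abs (k : ℕ) (s t : ℝ) :
    ‖lacunaryTerm k s - lacunaryTerm k t‖ ≤ 2 * π * 2 ^ k * |s - t| := by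
  rw [lacunaryTerm, lacunaryTerm, ← mul_sub, sub_sub_sub_cancel_right, norm_mul, norm_real,
    Real.norm_of_nonneg (by positivity)]
  calc 2⁻¹ ^ k * ‖e (4 ^ k * s) - e (4 ^ k * t)‖
        ≤ 2⁻¹ ^ k * (2 * π * |4 ^ k * s - 4 ^ k * t|) :=
          mul_le_mul_of_nonneg_left (norm_e_sub_e_le _ _) (by positivity)
    _ = 2 * π * 2 ^ k * |s - t| := by
        rw [← mul_sub, abs_mul, abs_of_pos (by positivity : (0 : ℝ) < 4 ^ k),
          show (4 : ℝ) ^ k = 2 ^ k * 2 ^ k by rw [← mul_pow]; norm_num]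
        have : (2⁻¹ : ℝ) ^ k * 2 ^ k = 1 := by rw [← mul_pow]; norm_num
        linear_combination (2 * π * 2 ^ k * |s - t|) * this

theorem norm_lacunaryTerm_sub_le (k : ℕ) (s t : ℝ) :
    ‖lacunaryTerm k s - lacunaryTerm k t‖ ≤ 2 * 2⁻¹ ^ k := by
  rw [lacunaryTerm, lacunaryTerm, ← mul_sub, sub_sub_sub_cancel_right, norm_mul, norm_real,
    Real.norm_of_nonneg (by positivity), mul_comm]
  refine mul_le_mul_of_nonneg_right ((norm_sub_le _ _).trans ?_) (by positivity)
  rw [norm_e, norm_e]; norm_num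

theorem summable_lacunaryTerm (t : ℝ) : Summable fun k => lacunaryTerm k t := by
  refine .of_norm_bounded
    ((summable_geometric_of_lt_one (r := (2⁻¹ : ℝ)) (by norm_num) (by norm_num)).mul_left 2)
    fun k => ?_
  simpa [lacunaryTerm, e_zero] using norm_lacunaryTerm_sub_le k t 0

theorem norm_lacunary_sub_le (s t : ℝ) :
    ‖lacunary s - lacunary t‖ ≤ (4 * π + 4) * √|s - t| := by
  refine (norm_tsum_sub_tsum_le_sqrt summable_lacunaryTerm norm_lacunaryTerm_sub_le_mul_abs
    norm_lacunaryTerm_sub_le s t).trans_eq ?_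
  ring

/-- At a dyadic point of level `m` only the terms with `4ᵏ < 2ᵐ` survive. -/
theorem lacunary_natCast_div (m j : ℕ) :
    lacunary (j / 2 ^ m) =
      trigSum (range ((m + 1) / 2)) (fun k => 2⁻¹ ^ k) (fun k => 4 ^ k) (2 ^ m) j -
        ∑ k ∈ range ((m + 1) / 2), ((2⁻¹ ^ k : ℝ) : ℂ) := by
  rw [lacunary, tsum_eq_sum (s := range ((m + 1) / 2)), trigSum, ← sum_sub_distrib]
  · refine sum_congr rfl fun k _ => ?_
    rw [lacunaryTerm, mul_sub, mul_one]
    congr 3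
    push_cast
    ring
  · intro k hk
    have hmk : m ≤ 2 * k := by simp only [Finset.mem_range, not_lt] at hk; omega
    have : (4 : ℝ) ^ k * (j / 2 ^ m) = ((j * 2 ^ (2 * k - m) : ℕ) : ℤ) := by
      rw [show (4 : ℝ) ^ k = 2 ^ m * 2 ^ (2 * k - m) by
        rw [← pow_add, Nat.add_sub_cancel' hmk, pow_mul]; norm_num]
      push_cast
      field_simp
    rw [lacunaryTerm, this, e_intCast, sub_self, mul_zero]

theorem lacunary_one : lacunary 1 = 0 := by
  simpa [trigSum] using lacunary_natCast_div 0 1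

def lacunaryArea (m : ℕ) : ℝ :=
  (∑ j ∈ range (2 ^ m), starRingEnd ℂ (lacunary (j / 2 ^ m)) * lacunary ((j + 1) / 2 ^ m)).im

theorem lacunaryArea_eq (m : ℕ) :
    lacunaryArea m =
      2 ^ m * ∑ k ∈ range ((m + 1) / 2), (2⁻¹ ^ k) ^ 2 * Real.sin (2 * π * (4 ^ k / 2 ^ m)) := by
  have hlt : ∀ k ∈ range ((m + 1) / 2), (4 : ℤ) ^ k < 2 ^ m := fun k hk => by
    rw [show (4 : ℤ) = 2 ^ 2 by norm_num, ← pow_mul]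
    exact pow_lt_pow_right₀ (by norm_num) (by simp only [Finset.mem_range] at hk; omega)
  have hn : ∀ k ∈ range ((m + 1) / 2), ∀ l ∈ range ((m + 1) / 2),
      ((2 ^ m : ℕ) : ℤ) ∣ 4 ^ l - 4 ^ k → k = l := fun k hk l hl hdvd => by
    push_cast at hdvd
    have := Int.eq_zero_of_abs_lt_dvd hdvd
      (abs_sub_lt_of_nonneg_of_lt (by positivity) (hlt l hl) (by positivity) (hlt k hk))
    exact ((pow_right_strictMono₀ (by norm_num : (1 : ℤ) < 4)).injective
      (sub_eq_zero.1 this)).symm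
  have hsucc : ∀ j : ℕ, lacunary ((j + 1) / 2 ^ m) = lacunary (((j + 1 : ℕ) : ℝ) / 2 ^ m) := by
    simp
  simp_rw [lacunaryArea, hsucc, lacunary_natCast_div]
  rw [im_sum_conj_trigSum_sub_mul _ _ _ _ hn]
  push_cast
  rfl

theorem lacunaryArea_add_two (m : ℕ) :
    lacunaryArea (m + 2) = lacunaryArea m + 2 ^ (m + 2) * Real.sin (2 * π / 2 ^ (m + 2)) := by
  rw [lacunaryArea_eq, lacunaryArea_eq, show (m + 2 + 1) / 2 = (m + 1) / 2 + 1 by omega,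
    sum_range_succ', mul_add, mul_sum, mul_sum]
  congr 1
  · refine sum_congr rfl fun k _ => ?_
    rw [show (4 : ℝ) ^ (k + 1) / 2 ^ (m + 2) = 4 ^ k / 2 ^ m by
      rw [pow_succ, pow_add]; field_simp; norm_num]
    ring
  · simp [div_eq_mul_inv]

theorem not_tendsto_lacunaryArea_sub_succ :
    ¬ Tendsto (fun m => lacunaryArea m - lacunaryArea (m + 1)) atTop (𝓝 0) := by
  intro h
  have h2 := h.add (h.comp (tendsto_add_atTop_nat 1))
  rw [add_zero] at h2
  refine absurd (le_of_tendsto' h2 fun m => ?_) (by norm_num : ¬ (0 : ℝ) ≤ -4)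
  have := four_le_mul_sin_two_pi_div (x := 2 ^ (m + 2)) (by
    calc (4 : ℝ) = 2 ^ 2 := by norm_num
      _ ≤ 2 ^ (m + 2) := pow_le_pow_right₀ (by norm_num) (by omega))
  simp only [Function.comp_apply, lacunaryArea_add_two]
  linarith

def lacunaryLoop (t : ℝ) : ℂ := if t ≤ 1 / 2 then lacunary (2 * t) else -lacunary (2 - 2 * t)

def lacunaryCurve (t : ℝ) : E 1 := orthonormalBasisOneI.repr (lacunaryLoop t)

theorem lacunaryLoop_one_sub (t : ℝ) : lacunaryLoop (1 - t) = -lacunaryLoop t := by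
  rcases lt_trichotomy t (1 / 2) with h | rfl | h
  · rw [lacunaryLoop, lacunaryLoop, if_neg (by linarith), if_pos h.le]; ring_nf
  · norm_num [lacunaryLoop, lacunary_one]
  · rw [lacunaryLoop, lacunaryLoop, if_pos (by linarith), if_neg (by linarith)]; ring_nf

theorem lacunaryCurve_one_sub (t : ℝ) : lacunaryCurve (1 - t) = -lacunaryCurve t := by
  rw [lacunaryCurve, lacunaryCurve, lacunaryLoop_one_sub, map_neg]

theorem norm_lacunaryLoop_sub_le (s t : ℝ) :
    ‖lacunaryLoop s - lacunaryLoop t‖ ≤ 2 * (√2 * (4 * π + 4)) * √|s - t| := by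
  have hl : ∀ s ≤ 1 / 2, ∀ t ≤ 1 / 2,
      ‖lacunaryLoop s - lacunaryLoop t‖ ≤ √2 * (4 * π + 4) * √|s - t| := by
    intro s hs t ht
    rw [lacunaryLoop, lacunaryLoop, if_pos hs, if_pos ht]
    refine (norm_lacunary_sub_le _ _).trans_eq ?_
    rw [← mul_sub, abs_mul, abs_two, Real.sqrt_mul zero_le_two]
    ring
  refine norm_sub_le_of_halves hl (fun s hs t ht => ?_) s t
  have hreflect : ∀ x, lacunaryLoop x = -lacunaryLoop (1 - x) := fun x => by
    rw [lacunaryLoop_one_sub, neg_neg]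
  calc ‖lacunaryLoop s - lacunaryLoop t‖ = ‖lacunaryLoop (1 - t) - lacunaryLoop (1 - s)‖ := by
        rw [hreflect s, hreflect t, neg_sub_neg]
    _ ≤ √2 * (4 * π + 4) * √|(1 - t) - (1 - s)| := hl _ (by linarith) _ (by linarith)
    _ = √2 * (4 * π + 4) * √|s - t| := by rw [sub_sub_sub_cancel_left]

theorem norm_lacunaryCurve_sub_le (s t : ℝ) :
    ‖lacunaryCurve s - lacunaryCurve t‖ ≤ 2 * (√2 * (4 * π + 4)) * √|s - t| := by
  rw [lacunaryCurve, lacunaryCurve, ← map_sub, LinearIsometryEquiv.norm_map]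
  exact norm_lacunaryLoop_sub_le s t

theorem halfDyadicSum_lacunaryCurve (m : ℕ) :
    halfDyadicSum 1 lacunaryCurve m = lacunaryArea m := by
  rw [halfDyadicSum, lacunaryArea, im_sum]
  refine sum_congr rfl fun j hj => ?_
  have hj : (j + 1 : ℝ) ≤ 2 ^ m := by exact_mod_cast Finset.mem_range.1 hj
  have hhalf : ∀ x : ℝ, x ≤ 2 ^ m → x / 2 ^ (m + 1) ≤ 1 / 2 := fun x hx => by
    rw [div_le_div_iff₀ (by positivity) two_pos, pow_succ]; linarith
  have htwice : ∀ x : ℝ, 2 * (x / 2 ^ (m + 1)) = x / 2 ^ m := fun x => by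
    rw [pow_succ]; field_simp
  rw [lacunaryCurve, lacunaryCurve, omegaF_repr_repr, lacunaryLoop, lacunaryLoop,
    if_pos (hhalf _ (by linarith)), if_pos (hhalf _ hj), htwice, htwice]

theorem polygonArea_lacunaryCurve_mixedDyadic (m : ℕ) :
    polygonArea 1 lacunaryCurve (3 * 2 ^ m) (mixedDyadic m) =
      (1 / 2) * (lacunaryArea m - lacunaryArea (m + 1)) := by
  rw [polygonArea_mixedDyadic lacunaryCurve_one_sub, halfDyadicSum_lacunaryCurve,
    halfDyadicSum_lacunaryCurve]

end LacunaryCurve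

open LacunaryCurve in
/-- **A `½`-Hölder curve whose dyadic approximations all have zero signed area but whose
signed area does not exist** (Lemma B.5).  There are `C > 0` and a continuous curve
`γ : [0,1] → ℝ²` with `|γ(s) − γ(t)| ≤ C √|s−t|` such that `A_{𝒫_k}(γ) = 0` for all `k`,
yet the signed area `A(γ)` does not exist. -/
theorem half_holder_no_signed_area :
    ∃ (C : ℝ) (γ : ℝ → E 1), 0 < C ∧
      ContinuousOn γ (Icc (0 : ℝ) 1) ∧
      (∀ s ∈ Icc (0 : ℝ) 1, ∀ t ∈ Icc (0 : ℝ) 1,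
        ‖γ s - γ t‖ ≤ C * Real.sqrt |s - t|) ∧
      (∀ k : ℕ, dyadArea γ k = 0) ∧
      ¬ ∃ A : ℝ, IsSympArea 1 0 1 γ A := by
  have hdyad := dyadArea_eq_zero_of_map_one_sub lacunaryCurve_one_sub
  refine ⟨2 * (√2 * (4 * π + 4)), lacunaryCurve, by positivity,
    (continuous_of_norm_sub_le_sqrt norm_lacunaryCurve_sub_le).continuousOn,
    fun s _ t _ => norm_lacunaryCurve_sub_le s t, hdyad, ?_⟩
  rintro ⟨A, hA⟩
  have hA0 : A = 0 := tendsto_nhds_unique hA.tendsto_dyadArea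
    (tendsto_const_nhds.congr fun k => (hdyad k).symm)
  have hmixed := hA.tendsto_polygonArea_mixedDyadic
  simp_rw [polygonArea_lacunaryCurve_mixedDyadic, hA0] at hmixed
  exact not_tendsto_lacunaryArea_sub_succ (by simpa using hmixed.const_mul 2)
end
end

section
/- Symplectic area of Lipschitz curves: let γ : [a,b] → ℝ^(2n) be Lipschitz. Then the symplectic area S(γ) exists and S(γ) = ½ ∑_{i=1}^n ∫_a^b ( γ_{x_i}(s) γ_{y_i}'(s) − γ_{y_i}(s) γ_{x_i}'(s) ) ds, where γ' denotes the almost-everywhere defined derivative of γ and (γ_{x_1}, γ_{y_1}, …, γ_{x_n}, γ_{y_n}) are the coordinate functions of γ. -/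
open MeasureTheory Set Filter Topology
open scoped ENNReal

noncomputable section

lemma coord_le_norm {n : ℕ} (u : E n) (j : Fin (2 * n)) : |u j| ≤ ‖u‖ := by
  have h := EuclideanSpace.norm_eq u
  rw [h]
  have h1 : |u j| = Real.sqrt ((u j)^2) := by rw [Real.sqrt_sq_eq_abs]
  rw [h1]
  apply Real.sqrt_le_sqrt
  have : ∀ i, (0:ℝ) ≤ ‖u i‖^2 := fun i => sq_nonneg _
  calc (u j)^2 = ‖u j‖^2 := by rw [Real.norm_eq_abs, sq_abs]
    _ ≤ ∑ i, ‖u i‖^2 := Finset.single_le_sum (fun i _ => this i) (Finset.mem_univ j)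

lemma omega_bound {n : ℕ} (u v : E n) : |omegaF n u v| ≤ 2 * n * ‖u‖ * ‖v‖ := by
  unfold omegaF
  calc |∑ i : Fin n, _| ≤ ∑ i : Fin n, (2 * (‖u‖ * ‖v‖)) := by
        apply Finset.abs_sum_le_sum_abs (fun i : Fin n =>
          (u ⟨2 * i.1, by omega⟩ * v ⟨2 * i.1 + 1, by omega⟩
            - v ⟨2 * i.1, by omega⟩ * u ⟨2 * i.1 + 1, by omega⟩)) Finset.univ |>.trans
        apply Finset.sum_le_sum
        intro i _
        have h1 := coord_le_norm u ⟨2 * i.1, by omega⟩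
        have h2 := coord_le_norm v ⟨2 * i.1 + 1, by omega⟩
        have h3 := coord_le_norm v ⟨2 * i.1, by omega⟩
        have h4 := coord_le_norm u ⟨2 * i.1 + 1, by omega⟩
        have := abs_nonneg (u ⟨2 * i.1, by omega⟩)
        calc |u ⟨2 * i.1, by omega⟩ * v ⟨2 * i.1 + 1, by omega⟩
            - v ⟨2 * i.1, by omega⟩ * u ⟨2 * i.1 + 1, by omega⟩|
            ≤ |u ⟨2 * i.1, by omega⟩ * v ⟨2 * i.1 + 1, by omega⟩|
              + |v ⟨2 * i.1, by omega⟩ * u ⟨2 * i.1 + 1, by omega⟩| := abs_sub _ _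
          _ ≤ 2 * (‖u‖ * ‖v‖) := by
              rw [abs_mul, abs_mul]
              nlinarith [abs_nonneg (u ⟨2 * i.1, by omega⟩), abs_nonneg (v ⟨2 * i.1 + 1, by omega⟩),
                abs_nonneg (v ⟨2 * i.1, by omega⟩), abs_nonneg (u ⟨2 * i.1 + 1, by omega⟩),
                norm_nonneg u, norm_nonneg v]
    _ = 2 * n * ‖u‖ * ‖v‖ := by simp [Finset.sum_const]; ring

lemma omega_sub_left {n : ℕ} (u u' v : E n) :
    omegaF n u v - omegaF n u' v = omegaF n (u - u') v := by
  unfold omegaF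
  rw [← Finset.sum_sub_distrib]
  apply Finset.sum_congr rfl
  intro i _
  have h1 : ∀ j : Fin (2 * n), (u - u') j = u j - u' j := fun j => rfl
  rw [h1, h1]; ring

def omegaCLM (n : ℕ) (u : E n) : E n →L[ℝ] ℝ :=
  ∑ i : Fin n,
    ((u ⟨2 * i.1, by have := i.isLt; omega⟩) • (EuclideanSpace.proj (⟨2 * i.1 + 1, by have := i.isLt; omega⟩ : Fin (2 * n)))
     - (u ⟨2 * i.1 + 1, by have := i.isLt; omega⟩) • (EuclideanSpace.proj (⟨2 * i.1, by have := i.isLt; omega⟩ : Fin (2 * n))))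

lemma omegaCLM_apply (n : ℕ) (u v : E n) : omegaCLM n u v = omegaF n u v := by
  unfold omegaCLM omegaF
  rw [ContinuousLinearMap.sum_apply]
  apply Finset.sum_congr rfl
  intro i _
  simp [PiLp.proj_apply]
  ring

variable {F : Type*} [NormedAddCommGroup F] [NormedSpace ℝ F] [CompleteSpace F]

/-- averages of a Lipschitz function tend to the value -/
lemma tendsto_avg (f : ℝ → F) (K : ℝ) (hK : 0 ≤ K)
    (hf : ∀ s t : ℝ, ‖f s - f t‖ ≤ K * |s - t|) (c : ℝ) :
    Tendsto (fun k : ℕ => ((k : ℝ) + 1) • ∫ x in c..(c + 1 / ((k : ℝ) + 1)), f x)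
      atTop (𝓝 (f c)) := by
  have hcont : Continuous f := by
    have : LipschitzWith K.toNNReal f := by
      apply lipschitzWith_iff_dist_le_mul.2
      intro s t
      rw [dist_eq_norm, Real.dist_eq, Real.coe_toNNReal K hK]
      exact hf s t
    exact this.continuous
  rw [tendsto_iff_norm_sub_tendsto_zero]
  apply squeeze_zero (fun k => norm_nonneg _) _ ?_
  · exact fun k => K * (1 / ((k : ℝ) + 1))
  · intro k
    set h : ℝ := 1 / ((k : ℝ) + 1) with hh
    have hhpos : 0 < h := by positivity
    have hmul : ((k : ℝ) + 1) * h = 1 := by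
      rw [hh]; rw [mul_one_div]; rw [div_self (by positivity)]
    have hint1 : IntervalIntegrable f volume c (c + h) := hcont.intervalIntegrable _ _
    have hint2 : IntervalIntegrable (fun _ => f c) volume c (c + h) :=
      intervalIntegrable_const
    have key : (∫ x in c..(c + h), f x) - h • f c = ∫ x in c..(c + h), (f x - f c) := by
      rw [intervalIntegral.integral_sub hint1 hint2, intervalIntegral.integral_const]
      simp
    have hbnd : ‖∫ x in c..(c + h), (f x - f c)‖ ≤ (K * h) * |c + h - c| := by
      apply intervalIntegral.norm_integral_le_of_norm_le_const
      intro x hx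
      rw [uIoc_of_le (by linarith)] at hx
      have : |x - c| ≤ h := by
        rw [abs_of_pos (by linarith [hx.1])]
        linarith [hx.2]
      calc ‖f x - f c‖ ≤ K * |x - c| := hf x c
        _ ≤ K * h := by nlinarith
    have : ((k : ℝ) + 1) • (∫ x in c..(c + h), f x) - f c
        = ((k : ℝ) + 1) • ((∫ x in c..(c + h), f x) - h • f c) := by
      rw [smul_sub, smul_smul, hmul, one_smul]
    rw [this, key, norm_smul]
    simp only [Real.norm_eq_abs]
    have : |c + h - c| = h := by rw [abs_of_pos]; ring_nf; linarith
    rw [this] at hbnd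
    calc |(k : ℝ) + 1| * ‖∫ x in c..(c + h), (f x - f c)‖
        ≤ |(k : ℝ) + 1| * (K * h * h) := by
          apply mul_le_mul_of_nonneg_left hbnd (abs_nonneg _)
      _ = K * h := by
          rw [abs_of_pos (by positivity)]
          calc ((k : ℝ) + 1) * (K * h * h) = K * (((k:ℝ)+1) * h) * h := by ring
            _ = K * h := by rw [hmul]; ring
  · have : Tendsto (fun k : ℕ => 1 / ((k : ℝ) + 1)) atTop (𝓝 0) :=
      tendsto_one_div_add_atTop_nhds_zero_nat
    simpa using this.const_mul K

/-- FTC for Lipschitz functions with a.e. derivative. -/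
lemma ftc_lip (f : ℝ → F) (g : ℝ → F) (K : ℝ) (hK : 0 ≤ K) {a b c d : ℝ}
    (hf : ∀ s t : ℝ, ‖f s - f t‖ ≤ K * |s - t|)
    (hg : ∀ᵐ s : ℝ, s ∈ Set.Ioo a b → HasDerivAt f (g s) s)
    (hac : a ≤ c) (hcd : c ≤ d) (hdb : d ≤ b) :
    ∫ s in c..d, g s = f d - f c := by
  have hcont : Continuous f := by
    have : LipschitzWith K.toNNReal f := by
      apply lipschitzWith_iff_dist_le_mul.2
      intro s t
      rw [dist_eq_norm, Real.dist_eq, Real.coe_toNNReal K hK]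
      exact hf s t
    exact this.continuous
  set μ := volume.restrict (Set.Ioc c d) with hμ
  set Fk : ℕ → ℝ → F := fun k x => ((k : ℝ) + 1) • (f (x + 1 / ((k : ℝ) + 1)) - f x) with hFk
  -- a.e. convergence
  have hd_ne : ∀ᵐ x : ℝ, x ≠ d := by
    rw [MeasureTheory.ae_iff]
    have : {x : ℝ | ¬x ≠ d} = {d} := by ext x; simp
    rw [this]
    exact Real.volume_singleton
  have h_lim : ∀ᵐ x ∂μ, Tendsto (fun k => Fk k x) atTop (𝓝 (g x)) := by
    rw [hμ, ae_restrict_iff' measurableSet_Ioc]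
    filter_upwards [hg, hd_ne] with x hx hxd hxcd
    have hxIoo : x ∈ Set.Ioo a b :=
      ⟨lt_of_le_of_lt hac hxcd.1, lt_of_le_of_ne (le_trans hxcd.2 hdb)
        (fun h => hxd (le_antisymm hxcd.2 (h ▸ hdb) |>.symm ▸ rfl))⟩
    have hder : HasDerivAt f (g x) x := hx hxIoo
    have hslope := hasDerivAt_iff_tendsto_slope.1 hder
    have hseq : Tendsto (fun k : ℕ => x + 1 / ((k : ℝ) + 1)) atTop (𝓝[≠] x) := by
      apply tendsto_nhdsWithin_of_tendsto_nhds_of_eventually_within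
      · have : Tendsto (fun k : ℕ => 1 / ((k : ℝ) + 1)) atTop (𝓝 0) :=
          tendsto_one_div_add_atTop_nhds_zero_nat
        simpa using tendsto_const_nhds.add this
      · filter_upwards with k
        have : (0:ℝ) < 1 / ((k : ℝ) + 1) := by positivity
        simp only [mem_compl_iff, mem_singleton_iff]
        intro h
        nlinarith [congrArg (· - x) h]
    have := hslope.comp hseq
    convert this using 2 with k
    show Fk k x = slope f x (x + 1 / ((k : ℝ) + 1))
    rw [slope]
    have h1 : (x + 1 / ((k : ℝ) + 1) - x) = 1 / ((k : ℝ) + 1) := by ring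
    rw [h1, vsub_eq_sub, hFk]
    simp only [one_div, inv_inv]
  -- measurability and bound
  have hFmeas : ∀ k, AEStronglyMeasurable (Fk k) μ := by
    intro k
    exact ((hcont.comp (continuous_id.add continuous_const)).sub hcont).const_smul
      ((k : ℝ) + 1) |>.aestronglyMeasurable
  have hbound_int : Integrable (fun _ : ℝ => K) μ := by
    rw [hμ]
    refine integrableOn_const ?_
    exact measure_Ioc_lt_top.ne
  have h_bd : ∀ k, ∀ᵐ x ∂μ, ‖Fk k x‖ ≤ K := by
    intro k
    filter_upwards with x
    rw [hFk]
    simp only [norm_smul, Real.norm_eq_abs]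
    have hpos : (0:ℝ) < (k : ℝ) + 1 := by positivity
    rw [abs_of_pos hpos]
    have h2 := hf (x + 1 / ((k : ℝ) + 1)) x
    have h3 : |x + 1 / ((k : ℝ) + 1) - x| = 1 / ((k : ℝ) + 1) := by
      rw [show x + 1 / ((k : ℝ) + 1) - x = 1 / ((k : ℝ) + 1) by ring]
      rw [abs_of_pos (by positivity)]
    rw [h3] at h2
    calc ((k:ℝ)+1) * ‖f (x + 1 / ((k : ℝ) + 1)) - f x‖
        ≤ ((k:ℝ)+1) * (K * (1 / ((k : ℝ) + 1))) := by nlinarith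
      _ = K := by field_simp
  have hDCT : Tendsto (fun k => ∫ x, Fk k x ∂μ) atTop (𝓝 (∫ x, g x ∂μ)) :=
    tendsto_integral_of_dominated_convergence (fun _ => K) hFmeas hbound_int h_bd h_lim
  -- identify the integrals of Fk
  have hFk_int : ∀ k : ℕ, (∫ x, Fk k x ∂μ)
      = ((k : ℝ) + 1) • (∫ x in d..(d + 1 / ((k : ℝ) + 1)), f x)
        - ((k : ℝ) + 1) • (∫ x in c..(c + 1 / ((k : ℝ) + 1)), f x) := by
    intro k
    have hii : ∀ u v : ℝ, IntervalIntegrable f volume u v := fun u v =>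
      hcont.intervalIntegrable u v
    have hii' : ∀ u v : ℝ, IntervalIntegrable (fun x => f (x + 1 / ((k : ℝ) + 1))) volume u v :=
      fun u v => (hcont.comp (continuous_id.add continuous_const)).intervalIntegrable u v
    have e1 : (∫ x, Fk k x ∂μ) = ∫ x in c..d, Fk k x := by
      rw [hμ, intervalIntegral.integral_of_le hcd]
    have e2 : (∫ x in c..d, f (x + 1 / ((k : ℝ) + 1)))
        = ∫ x in (c + 1 / ((k : ℝ) + 1))..(d + 1 / ((k : ℝ) + 1)), f x :=
      intervalIntegral.integral_comp_add_right f _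
    have e3 := intervalIntegral.integral_interval_sub_interval_comm
      (hii (c + 1 / ((k : ℝ) + 1)) (d + 1 / ((k : ℝ) + 1))) (hii c d)
      (hii (c + 1 / ((k : ℝ) + 1)) c) (μ := volume)
    have e4 : (∫ x in (c + 1 / ((k : ℝ) + 1))..c, f x)
        = -∫ x in c..(c + 1 / ((k : ℝ) + 1)), f x := intervalIntegral.integral_symm _ _
    have e5 : (∫ x in (d + 1 / ((k : ℝ) + 1))..d, f x)
        = -∫ x in d..(d + 1 / ((k : ℝ) + 1)), f x := intervalIntegral.integral_symm _ _
    rw [e1, hFk]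
    rw [intervalIntegral.integral_smul]
    rw [intervalIntegral.integral_sub (hii' c d) (hii c d)]
    rw [e2]
    rw [e3, e4, e5]
    rw [smul_sub, smul_neg, smul_neg]
    abel
  have hlim2 : Tendsto (fun k => ∫ x, Fk k x ∂μ) atTop (𝓝 (f d - f c)) := by
    have := (tendsto_avg f K hK hf d).sub (tendsto_avg f K hK hf c)
    apply this.congr
    intro k
    exact (hFk_int k).symm
  have := tendsto_nhds_unique hDCT hlim2
  rw [intervalIntegral.integral_of_le hcd, ← hμ]
  exact this


lemma coord_aesm {α : Type*} [MeasurableSpace α] {μ : MeasureTheory.Measure α} {n : ℕ}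
    {h : α → E n} (hh : AEStronglyMeasurable h μ) (j : Fin (2 * n)) :
    AEStronglyMeasurable (fun s => h s j) μ := by
  have c1 : Continuous (fun v : E n => v j) := by
    have c2 := (PiLp.continuousLinearEquiv 2 ℝ (fun _ : Fin (2*n) => ℝ)).continuous
    exact (continuous_apply j).comp c2
  exact c1.comp_aestronglyMeasurable hh

lemma omega_self {n : ℕ} (u : E n) : omegaF n u u = 0 := by
  simp [omegaF]

lemma ae_ne_pt (r : ℝ) : ∀ᵐ x : ℝ, x ≠ r := by
  rw [MeasureTheory.ae_iff]
  have : {x : ℝ | ¬x ≠ r} = {r} := by ext x; simp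
  rw [this]
  exact Real.volume_singleton

/-- **Symplectic area of Lipschitz curves** (Lemma 2.11).  If `γ : [a,b] → ℝ^(2n)` is
Lipschitz with a.e. derivative `g`, then the symplectic area `S(γ)` exists and equals
`½ ∑_{i=1}^n ∫_a^b (γ_{x_i} γ_{y_i}' − γ_{y_i} γ_{x_i}') ds = ½ ∫_a^b ω(γ(s), γ'(s)) ds`. -/
theorem symp_area_lipschitz (n : ℕ) (hn : 1 ≤ n) (a b : ℝ) (hab : a < b)
    (γ : ℝ → E n) (K : ℝ)
    (hγ : ∀ s ∈ Icc a b, ∀ t ∈ Icc a b, ‖γ s - γ t‖ ≤ K * |s - t|)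
    (g : ℝ → E n)
    (hg : ∀ᵐ s ∂(volume.restrict (Icc a b)), HasDerivAt γ (g s) s) :
    IsSympArea n a b γ ((1 / 2) * ∫ s in Icc a b, omegaF n (γ s) (g s)) := by
  have hK0 : 0 ≤ K := by
    have h1 := hγ b ⟨hab.le, le_refl b⟩ a ⟨le_refl a, hab.le⟩
    have h2 : |b - a| = b - a := abs_of_pos (by linarith)
    rw [h2] at h1
    nlinarith [norm_nonneg (γ b - γ a)]
  set f : ℝ → E n := fun x => γ (max a (min b x)) with hfdef
  have hfeq : ∀ x ∈ Icc a b, f x = γ x := by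
    intro x hx
    rw [hfdef]
    simp only
    rw [min_eq_right hx.2, max_eq_right hx.1]
  have hclamp : ∀ x : ℝ, max a (min b x) ∈ Icc a b := fun x =>
    ⟨le_max_left _ _, max_le hab.le (min_le_left _ _)⟩
  have hflip : ∀ s t : ℝ, ‖f s - f t‖ ≤ K * |s - t| := by
    intro s t
    refine (hγ _ (hclamp s) _ (hclamp t)).trans ?_
    apply mul_le_mul_of_nonneg_left _ hK0
    calc |max a (min b s) - max a (min b t)|
        = |max (min b s) a - max (min b t) a| := by rw [max_comm a, max_comm a]
      _ ≤ |min b s - min b t| := abs_max_sub_max_le_abs _ _ _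
      _ ≤ max |b - b| |s - t| := abs_min_sub_min_le_max _ _ _ _
      _ = |s - t| := by simp
  have hfcont : Continuous f := by
    have : LipschitzWith K.toNNReal f := by
      apply lipschitzWith_iff_dist_le_mul.2
      intro s t
      rw [dist_eq_norm, Real.dist_eq, Real.coe_toNNReal K hK0]
      exact hflip s t
    exact this.continuous
  have hg' : ∀ᵐ s : ℝ, s ∈ Ioo a b → HasDerivAt f (g s) s := by
    have h1 : ∀ᵐ s : ℝ, s ∈ Icc a b → HasDerivAt γ (g s) s :=
      (ae_restrict_iff' measurableSet_Icc).1 hg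
    filter_upwards [h1] with s hs hsIoo
    have hder := hs (Ioo_subset_Icc_self hsIoo)
    exact hder.congr_of_eventuallyEq (Filter.eventuallyEq_of_mem
      (isOpen_Ioo.mem_nhds hsIoo) (fun x hx => hfeq x (Ioo_subset_Icc_self hx)))
  have hgK : ∀ᵐ s : ℝ, s ∈ Ioo a b → ‖g s‖ ≤ K := by
    filter_upwards [hg'] with s hs hsIoo
    have hder := hs hsIoo
    have hslope := hasDerivAt_iff_tendsto_slope.1 hder
    refine le_of_tendsto hslope.norm (Eventually.of_forall ?_)
    intro y
    rcases eq_or_ne y s with rfl | hys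
    · simpa [slope_same] using hK0
    · rw [slope, vsub_eq_sub, norm_smul, Real.norm_eq_abs, abs_inv]
      have h2 := hflip y s
      have h3 : (0:ℝ) < |y - s| := abs_pos.2 (sub_ne_zero.2 hys)
      calc |y - s|⁻¹ * ‖f y - f s‖ ≤ |y - s|⁻¹ * (K * |y - s|) := by
            apply mul_le_mul_of_nonneg_left h2 (by positivity)
        _ = K := by field_simp
  have hIccIoo : ∀ᵐ s ∂(volume.restrict (Icc a b)), s ∈ Ioo a b := by
    rw [ae_restrict_iff' measurableSet_Icc]
    filter_upwards [ae_ne_pt a, ae_ne_pt b] with s hsa hsb hs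
    exact ⟨lt_of_le_of_ne hs.1 (Ne.symm hsa), lt_of_le_of_ne hs.2 hsb⟩
  have hgmeas : AEStronglyMeasurable g (volume.restrict (Icc a b)) := by
    have h3 : g =ᵐ[volume.restrict (Icc a b)] deriv f := by
      filter_upwards [hIccIoo, ae_restrict_of_ae hg'] with s hs1 hs2
      exact ((hs2 hs1).deriv).symm
    exact (stronglyMeasurable_deriv f).aestronglyMeasurable.congr h3.symm
  have hgKres : ∀ᵐ s ∂(volume.restrict (Icc a b)), ‖g s‖ ≤ K := by
    filter_upwards [hIccIoo, ae_restrict_of_ae hgK] with s h1 h2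
    exact h2 h1
  have hgint : IntegrableOn g (Icc a b) volume :=
    Integrable.mono' (integrableOn_const measure_Icc_lt_top.ne) hgmeas hgKres
  set M : ℝ := ‖γ a‖ + K * (b - a) with hM
  have hM0 : 0 ≤ M := by
    have h1 : (0:ℝ) ≤ K * (b - a) := mul_nonneg hK0 (by linarith)
    have := norm_nonneg (γ a)
    rw [hM]; linarith
  have hγbdd : ∀ s ∈ Icc a b, ‖γ s‖ ≤ M := by
    intro s hs
    have h1 := hγ s hs a ⟨le_refl a, hab.le⟩
    have h2 : |s - a| ≤ b - a := by
      rw [abs_of_nonneg (by linarith [hs.1])]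
      linarith [hs.2]
    have h3 : ‖γ s‖ - ‖γ a‖ ≤ ‖γ s - γ a‖ := norm_sub_norm_le _ _
    rw [hM]
    nlinarith
  have hγcont : ContinuousOn γ (Icc a b) :=
    (hfcont.continuousOn (s := Icc a b)).congr (fun x hx => (hfeq x hx).symm)
  have hγmeas : AEStronglyMeasurable γ (volume.restrict (Icc a b)) :=
    hγcont.aestronglyMeasurable measurableSet_Icc
  set φ : ℝ → ℝ := fun s => omegaF n (γ s) (g s) with hφ
  have hφmeas : AEStronglyMeasurable φ (volume.restrict (Icc a b)) := by
    rw [hφ]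
    simp only [omegaF]
    apply Finset.aestronglyMeasurable_fun_sum
    intro i _
    apply AEStronglyMeasurable.sub
    · exact (coord_aesm hγmeas _).mul (coord_aesm hgmeas _)
    · exact (coord_aesm hgmeas _).mul (coord_aesm hγmeas _)
  have hφint : IntegrableOn φ (Icc a b) volume := by
    apply Integrable.mono' (g := fun _ => 2*n*M*K)
      (integrableOn_const measure_Icc_lt_top.ne) hφmeas
    filter_upwards [hgKres, ae_restrict_mem measurableSet_Icc] with s h1 h2
    simp only [hφ, Real.norm_eq_abs]
    have hb := omega_bound (γ s) (g s)
    have h4 := hγbdd s h2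
    have h5 : (0:ℝ) ≤ 2 * n := by positivity
    have h6 : ‖γ s‖ * ‖g s‖ ≤ M * K := mul_le_mul h4 h1 (norm_nonneg _) hM0
    nlinarith [hb, h5, h6]
  intro ε hε
  set D : ℝ := (n : ℝ) * K^2 * (b - a) + 1 with hD
  have hD1 : 0 < D := by
    have h1 : (0:ℝ) ≤ (n:ℝ) * K^2 * (b - a) :=
      mul_nonneg (mul_nonneg (Nat.cast_nonneg n) (sq_nonneg K)) (by linarith)
    rw [hD]; linarith
  refine ⟨ε / D, div_pos hε hD1, ?_⟩
  intro k t ht0 htl hlt hmesh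
  set δ : ℝ := ε / D with hδdef
  have hδ0 : 0 < δ := div_pos hε hD1
  rcases Nat.eq_zero_or_pos k with rfl | hk
  · exfalso
    have h1 : (Fin.last 0 : Fin 1) = 0 := rfl
    rw [h1, ht0] at htl
    exact absurd htl hab.ne
  have hsm : StrictMono t := Fin.strictMono_iff_lt_succ.2 hlt
  have htmem : ∀ i : Fin (k+1), t i ∈ Icc a b := by
    intro i
    constructor
    · rw [← ht0]; exact hsm.monotone (Fin.zero_le i)
    · rw [← htl]; exact hsm.monotone (Fin.le_last i)
  set u : ℕ → ℝ := fun j => t ⟨min j k, by omega⟩ with hu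
  have huc : ∀ i : Fin k, u i.1 = t i.castSucc := by
    intro i
    have hik := i.isLt
    have he : (⟨min i.1 k, by omega⟩ : Fin (k+1)) = i.castSucc := by
      apply Fin.ext
      simp only [Fin.coe_castSucc]
      omega
    show t ⟨min i.1 k, by omega⟩ = t i.castSucc
    rw [he]
  have hus : ∀ i : Fin k, u (i.1 + 1) = t i.succ := by
    intro i
    have hik := i.isLt
    have he : (⟨min (i.1 + 1) k, by omega⟩ : Fin (k+1)) = i.succ := by
      apply Fin.ext
      simp only [Fin.val_succ]
      omega
    show t ⟨min (i.1 + 1) k, by omega⟩ = t i.succ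
    rw [he]
  have hu0 : u 0 = a := by
    have he : (⟨min 0 k, by omega⟩ : Fin (k+1)) = 0 := by
      apply Fin.ext
      simp
    show t ⟨min 0 k, by omega⟩ = a
    rw [he, ht0]
  have huk : u k = b := by
    have he : (⟨min k k, by omega⟩ : Fin (k+1)) = Fin.last k := by
      apply Fin.ext
      simp [Fin.val_last]
    show t ⟨min k k, by omega⟩ = b
    rw [he, htl]
  have hsub : ∀ i : Fin k, Set.uIcc (t i.castSucc) (t i.succ) ⊆ Icc a b := by
    intro i
    rw [uIcc_of_le (hlt i).le]
    exact Icc_subset_Icc (htmem i.castSucc).1 (htmem i.succ).2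
  have hφii : ∀ i : Fin k, IntervalIntegrable φ volume (t i.castSucc) (t i.succ) := by
    intro i
    rw [intervalIntegrable_iff]
    exact hφint.mono_set ((Ioc_subset_Icc_self).trans (hsub i))
  have hgii : ∀ i : Fin k, IntervalIntegrable g volume (t i.castSucc) (t i.succ) := by
    intro i
    rw [intervalIntegrable_iff]
    exact hgint.mono_set ((Ioc_subset_Icc_self).trans (hsub i))
  have key : ∀ i : Fin k, omegaF n (γ (t i.castSucc)) (γ (t i.succ))
      = ∫ s in (t i.castSucc)..(t i.succ), omegaF n (γ (t i.castSucc)) (g s) := by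
    intro i
    have hftc : (∫ s in (t i.castSucc)..(t i.succ), g s) = f (t i.succ) - f (t i.castSucc) :=
      ftc_lip f g K hK0 hflip hg' (htmem i.castSucc).1 (hlt i).le (htmem i.succ).2
    have e1 : (∫ s in (t i.castSucc)..(t i.succ), omegaF n (γ (t i.castSucc)) (g s))
        = ∫ s in (t i.castSucc)..(t i.succ), (omegaCLM n (γ (t i.castSucc))) (g s) := by
      simp_rw [omegaCLM_apply]
    have e2 := ContinuousLinearMap.intervalIntegral_comp_comm
      (omegaCLM n (γ (t i.castSucc))) (hgii i)
    rw [e1, e2, hftc, hfeq _ (htmem i.succ), hfeq _ (htmem i.castSucc), map_sub,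
      omegaCLM_apply, omegaCLM_apply, omega_self, sub_zero]
  have hgA : ∀ i : Fin k, IntervalIntegrable (fun s => omegaF n (γ (t i.castSucc)) (g s))
      volume (t i.castSucc) (t i.succ) := by
    intro i
    rw [intervalIntegrable_iff]
    have h1 : IntegrableOn g (Set.uIoc (t i.castSucc) (t i.succ)) volume :=
      intervalIntegrable_iff.1 (hgii i)
    exact ((omegaCLM n (γ (t i.castSucc))).integrable_comp h1).congr
      (Eventually.of_forall fun s => omegaCLM_apply n _ (g s))
  have hLsum : (∫ s in Icc a b, φ s) = ∑ i : Fin k, ∫ s in (t i.castSucc)..(t i.succ), φ s := by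
    have h1 : (∫ s in Icc a b, φ s) = ∫ s in a..b, φ s := by
      rw [intervalIntegral.integral_of_le hab.le, integral_Icc_eq_integral_Ioc]
    have hadj : ∀ j, j < k → IntervalIntegrable φ volume (u j) (u (j+1)) := by
      intro j hj
      have h2 := hφii ⟨j, hj⟩
      rwa [← huc ⟨j, hj⟩, ← hus ⟨j, hj⟩] at h2
    have h2 := intervalIntegral.sum_integral_adjacent_intervals hadj
    rw [h1, ← hu0, ← huk, ← h2,
      ← Fin.sum_univ_eq_sum_range (fun j => ∫ s in u j..u (j+1), φ s) k]
    exact Finset.sum_congr rfl fun i _ => by rw [huc i, hus i]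
  have hdiff : SHat n γ k t - (1/2) * ∫ s in Icc a b, φ s
      = (1/2) * ∑ i : Fin k, ∫ s in (t i.castSucc)..(t i.succ),
          (omegaF n (γ (t i.castSucc)) (g s) - φ s) := by
    rw [hLsum]
    simp only [SHat]
    rw [← mul_sub, ← Finset.sum_sub_distrib]
    congr 1
    refine Finset.sum_congr rfl fun i _ => ?_
    rw [key i, ← intervalIntegral.integral_sub (hgA i) (hφii i)]
  have hterm : ∀ i : Fin k, |∫ s in (t i.castSucc)..(t i.succ),
      (omegaF n (γ (t i.castSucc)) (g s) - φ s)|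
      ≤ (2*(n:ℝ)*K^2*δ) * (t i.succ - t i.castSucc) := by
    intro i
    have hC : ‖∫ s in (t i.castSucc)..(t i.succ),
        (omegaF n (γ (t i.castSucc)) (g s) - φ s)‖
        ≤ (2*(n:ℝ)*(K*δ)*K) * |t i.succ - t i.castSucc| := by
      apply intervalIntegral.norm_integral_le_of_norm_le_const_ae
      filter_upwards [hgK, ae_ne_pt b] with s hs1 hs2 hsmem
      rw [uIoc_of_le (hlt i).le] at hsmem
      have hsIcc : s ∈ Icc a b :=
        ⟨le_trans (htmem i.castSucc).1 hsmem.1.le, le_trans hsmem.2 (htmem i.succ).2⟩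
      have hsIoo : s ∈ Ioo a b :=
        ⟨lt_of_le_of_lt (htmem i.castSucc).1 hsmem.1, lt_of_le_of_ne hsIcc.2 hs2⟩
      have hgs := hs1 hsIoo
      rw [hφ, Real.norm_eq_abs]
      rw [show omegaF n (γ (t i.castSucc)) (g s) - omegaF n (γ s) (g s)
        = omegaF n (γ (t i.castSucc) - γ s) (g s) from omega_sub_left _ _ _]
      have hb := omega_bound (γ (t i.castSucc) - γ s) (g s)
      have hγd : ‖γ (t i.castSucc) - γ s‖ ≤ K * δ := by
        have h1 := hγ (t i.castSucc) (htmem i.castSucc) s hsIcc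
        have h2 : |t i.castSucc - s| ≤ δ := by
          rw [abs_of_nonpos (by linarith [hsmem.1])]
          have := hmesh i
          have h3 : t i.succ - t i.castSucc < δ := by
            rw [hδdef]; exact this
          linarith [hsmem.2]
        calc ‖γ (t i.castSucc) - γ s‖ ≤ K * |t i.castSucc - s| := h1
          _ ≤ K * δ := mul_le_mul_of_nonneg_left h2 hK0
      have h5 : (0:ℝ) ≤ 2 * (n:ℝ) := by positivity
      have h6 : ‖γ (t i.castSucc) - γ s‖ * ‖g s‖ ≤ (K * δ) * K :=
        mul_le_mul hγd hgs (norm_nonneg _) (by positivity)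
      nlinarith [hb, h5, h6]
    rw [Real.norm_eq_abs] at hC
    rw [abs_of_pos (show (0:ℝ) < t i.succ - t i.castSucc by linarith [hlt i])] at hC
    calc |∫ s in (t i.castSucc)..(t i.succ),
        (omegaF n (γ (t i.castSucc)) (g s) - φ s)|
        ≤ (2*(n:ℝ)*(K*δ)*K) * (t i.succ - t i.castSucc) := hC
      _ = (2*(n:ℝ)*K^2*δ) * (t i.succ - t i.castSucc) := by ring
  have htel : ∑ i : Fin k, (t i.succ - t i.castSucc) = b - a := by
    have h1 : ∑ j ∈ Finset.range k, (u (j+1) - u j) = u k - u 0 := Finset.sum_range_sub u k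
    rw [← Fin.sum_univ_eq_sum_range (fun j => u (j+1) - u j) k, hu0, huk] at h1
    rw [← h1]
    exact Finset.sum_congr rfl fun i _ => by rw [huc i, hus i]
  rw [hdiff]
  have hstep1 : |(1/2 : ℝ) * ∑ i : Fin k, ∫ s in (t i.castSucc)..(t i.succ),
      (omegaF n (γ (t i.castSucc)) (g s) - φ s)|
      ≤ (1/2) * ∑ i : Fin k, (2*(n:ℝ)*K^2*δ) * (t i.succ - t i.castSucc) := by
    rw [abs_mul, abs_of_pos (by norm_num : (0:ℝ) < 1/2)]
    apply mul_le_mul_of_nonneg_left _ (by norm_num)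
    exact (Finset.abs_sum_le_sum_abs _ _).trans (Finset.sum_le_sum fun i _ => hterm i)
  have hstep2 : (1/2 : ℝ) * ∑ i : Fin k, (2*(n:ℝ)*K^2*δ) * (t i.succ - t i.castSucc)
      = (n:ℝ) * K^2 * (b - a) * δ := by
    rw [← Finset.mul_sum, htel]
    ring
  have hstep3 : (n:ℝ) * K^2 * (b - a) * δ < ε := by
    have hq : (n:ℝ)*K^2*(b-a) < D := by rw [hD]; linarith
    have h2 : (n:ℝ)*K^2*(b-a) * δ < D * δ := mul_lt_mul_of_pos_right hq hδ0
    have h3 : D * δ = ε := by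
      rw [hδdef]
      field_simp
    linarith
  calc |(1/2 : ℝ) * ∑ i : Fin k, ∫ s in (t i.castSucc)..(t i.succ),
      (omegaF n (γ (t i.castSucc)) (g s) - φ s)|
      ≤ (1/2) * ∑ i : Fin k, (2*(n:ℝ)*K^2*δ) * (t i.succ - t i.castSucc) := hstep1
    _ = (n:ℝ) * K^2 * (b - a) * δ := hstep2
    _ < ε := hstep3
end
end

section
/- Continuity of symplectic area under uniform convergence with bounded lengths: let γ, γ_i : [a,b] → ℝ^(2n) (i ∈ ℕ) be continuous curves of finite length (finite total variation), suppose γ_i → γ uniformly on [a,b], and suppose sup_{i} ℓ(γ_i) < ∞. Then the symplectic areas S(γ) and S(γ_i) all exist and lim_{i→∞} S(γ_i) = S(γ). -/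
open MeasureTheory Set Filter Topology
open scoped ENNReal

noncomputable section

/-! Since `ω` is alternating, `Ŝ(γ_P) = ½ ∑ ω(γ(tᵢ), γ(tᵢ₊₁) - γ(tᵢ))` is a Riemann–Stieltjes sum.
Refining a partition changes it by `½ ∑ ω(γ(sⱼ) - γ(tᵢ), γ(sⱼ₊₁) - γ(sⱼ))`, which is at most
`‖ω‖` times the oscillation of `γ` at the scale of the mesh times `ℓ(γ)`; comparing two fine
partitions through their common refinement gives a Cauchy criterion, so the area of a continuous
curve of finite length exists. For two curves at uniform distance `ε`, summation by parts bounds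
`|Ŝ(γ_P) - Ŝ(g_P)|` by `‖ω‖ ε (ℓ(γ) + ℓ(g) + |g(a)| + |g(b)|)` for every partition `P`, hence the
areas differ by at most as much; with `ℓ(γᵢ) ≤ C` this tends to `0`. -/

theorem Fin.clamp_val {m : ℕ} (j : Fin (m + 1)) : Fin.clamp j m = j :=
  Fin.ext (min_eq_left (Nat.le_of_lt_succ j.2))

theorem Finset.exists_monotone_enum {α : Type*} [LinearOrder α] (R : Finset α)
    (hR : R.Nonempty) :
    ∃ (s : ℕ → α) (ι : α → ℕ), Monotone s ∧ (∀ j, s j ∈ R) ∧ MonotoneOn ι R ∧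
      ∀ r ∈ R, s (ι r) = r := by
  obtain ⟨m, hm⟩ : ∃ m, R.card = m + 1 := Nat.exists_eq_succ_of_ne_zero hR.card_pos.ne'
  set e := R.orderEmbOfFin hm
  have he : ∀ r ∈ R, e (Function.invFun (⇑e) r) = r := fun r hr =>
    Function.invFun_eq (by rwa [← Set.mem_range, Finset.range_orderEmbOfFin])
  refine ⟨fun j => e (Fin.clamp j m), fun r => ((Function.invFun (⇑e) r : Fin (m + 1)) : ℕ),
    e.monotone.comp Fin.clamp_monotone, fun j => R.orderEmbOfFin_mem hm _,
    fun r hr r' hr' hrr' => ?_, fun r hr => by simp only [Fin.clamp_val, he r hr]⟩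
  exact e.le_iff_le.1 (by rwa [he r hr, he r' hr'])

theorem sum_norm_sub_le_eVariationOn {α E : Type*} [LinearOrder α] [NormedAddCommGroup E]
    {f : α → E} {s : Set α} (hf : eVariationOn f s ≠ ⊤) {u : ℕ → α} (hu : Monotone u)
    (hus : ∀ j, u j ∈ s) (p q : ℕ) :
    ∑ j ∈ Finset.Ico p q, ‖f (u (j + 1)) - f (u j)‖ ≤ (eVariationOn f s).toReal := by
  calc _ ≤ ∑ j ∈ Finset.range q, ‖f (u (j + 1)) - f (u j)‖ :=
        Finset.sum_le_sum_of_subset_of_nonneg (fun j => by simp)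
          fun _ _ _ => norm_nonneg _
    _ = (∑ j ∈ Finset.range q, edist (f (u (j + 1))) (f (u j))).toReal := by
        rw [ENNReal.toReal_sum fun _ _ => edist_ne_top _ _]
        simp [edist_dist, dist_eq_norm]
    _ ≤ _ := ENNReal.toReal_mono hf (eVariationOn.sum_le hu hus)

theorem tendsto_of_forall_eventually_abs_sub_le {ι : Type*} {l : Filter ι} {u : ι → ℝ} {L c : ℝ}
    (h : ∀ η > 0, ∀ᶠ i in l, |u i - L| ≤ c * η) : Tendsto u l (𝓝 L) := by
  rw [Metric.tendsto_nhds]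
  intro ε hε
  filter_upwards [h (ε / (|c| + 1)) (by positivity)] with i hi
  rw [Real.dist_eq]
  calc _ ≤ c * (ε / (|c| + 1)) := hi
    _ ≤ |c| * (ε / (|c| + 1)) := by gcongr; exact le_abs_self c
    _ < ε := by rw [mul_div_assoc', div_lt_iff₀ (by positivity)]; nlinarith [abs_nonneg c]

section Polygon

open Finset

variable {F : Type*} [NormedAddCommGroup F] [NormedSpace ℝ F] {ω : F →L[ℝ] F →L[ℝ] ℝ}

def polygonSum (ω : F →L[ℝ] F →L[ℝ] ℝ) (x : ℕ → F) (p q : ℕ) : ℝ :=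
  ∑ j ∈ Ico p q, ω (x j) (x (j + 1))

theorem apply_add_apply_swap (hω : ∀ u, ω u u = 0) (u v : F) : ω u v + ω v u = 0 := by
  have := hω (u + v)
  simp only [map_add, add_apply, hω] at this
  linarith

theorem abs_sum_apply_le {ι : Type*} (s : Finset ι) (u v : ι → F) {ε : ℝ}
    (hu : ∀ j ∈ s, ‖u j‖ ≤ ε) : |∑ j ∈ s, ω (u j) (v j)| ≤ ‖ω‖ * ε * ∑ j ∈ s, ‖v j‖ := by
  rw [mul_sum]
  refine (abs_sum_le_sum_abs _ _).trans (sum_le_sum fun j hj => (ω.le_opNorm₂ _ _).trans ?_)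
  gcongr
  exact hu j hj

theorem polygonSum_sub_apply_eq (hω : ∀ u, ω u u = 0) (x : ℕ → F) {p q : ℕ} (hpq : p ≤ q) :
    polygonSum ω x p q - ω (x p) (x q) = ∑ j ∈ Ico p q, ω (x j - x p) (x (j + 1) - x j) := by
  induction q, hpq using Nat.le_induction with
  | base => simp [polygonSum, hω]
  | succ q hpq ih =>
    rw [polygonSum, sum_Ico_succ_top hpq, sum_Ico_succ_top hpq, ← ih, polygonSum]
    simp only [map_sub, sub_apply, hω]
    ring

theorem sum_Ico_eq_sum_range_sum_Ico {M : Type*} [AddCommMonoid M] (f : ℕ → M) {φ : ℕ → ℕ}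
    (hφ : Monotone φ) (k : ℕ) :
    ∑ j ∈ Ico (φ 0) (φ k), f j = ∑ i ∈ range k, ∑ j ∈ Ico (φ i) (φ (i + 1)), f j := by
  induction k with
  | zero => simp
  | succ k ih =>
    rw [sum_range_succ, ← ih, sum_Ico_consecutive _ (hφ k.zero_le) (hφ k.le_succ)]

theorem abs_polygonSum_sub_polygonSum_comp_le (hω : ∀ u, ω u u = 0) (x : ℕ → F) {φ : ℕ → ℕ}
    (hφ : Monotone φ) (k : ℕ) {ε : ℝ}
    (hx : ∀ i < k, ∀ j ∈ Finset.Ico (φ i) (φ (i + 1)), ‖x j - x (φ i)‖ ≤ ε) :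
    |polygonSum ω x (φ 0) (φ k) - polygonSum ω (x ∘ φ) 0 k| ≤
      ‖ω‖ * ε * ∑ j ∈ Ico (φ 0) (φ k), ‖x (j + 1) - x j‖ := by
  have hblocks : polygonSum ω x (φ 0) (φ k) - polygonSum ω (x ∘ φ) 0 k =
      ∑ i ∈ range k, ∑ j ∈ Ico (φ i) (φ (i + 1)), ω (x j - x (φ i)) (x (j + 1) - x j) := by
    rw [polygonSum, polygonSum, sum_Ico_eq_sum_range_sum_Ico _ hφ, ← range_eq_Ico,
      ← sum_sub_distrib]
    exact sum_congr rfl fun i _ => polygonSum_sub_apply_eq hω x (hφ i.le_succ)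
  rw [hblocks, sum_Ico_eq_sum_range_sum_Ico _ hφ, mul_sum]
  exact (abs_sum_le_sum_abs _ _).trans (sum_le_sum fun i hi =>
    abs_sum_apply_le _ _ _ (hx i (mem_range.1 hi)))

theorem abs_polygonSum_sub_polygonSum_le (hω : ∀ u, ω u u = 0) (x y : ℕ → F) {p q : ℕ}
    (hpq : p ≤ q) {ε : ℝ} (hxy : ∀ j ∈ Finset.Icc p q, ‖x j - y j‖ ≤ ε) :
    |polygonSum ω x p q - polygonSum ω y p q| ≤ ‖ω‖ * ε *
      (∑ j ∈ Ico p q, ‖x (j + 1) - x j‖ + ∑ j ∈ Ico p q, ‖y (j + 1) - y j‖ + ‖y p‖ + ‖y q‖) := by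
  set d := fun j => x j - y j
  have hsplit : ∀ j, ω (x j) (x (j + 1)) - ω (y j) (y (j + 1)) =
      ω (d j) (x (j + 1) - x j) + ω (d (j + 1)) (y (j + 1) - y j) -
        (ω (d (j + 1)) (y (j + 1)) - ω (d j) (y j)) := by
    intro j
    simp only [d, map_sub, sub_apply, hω]
    linear_combination -apply_add_apply_swap hω (y j) (y (j + 1)) +
      apply_add_apply_swap hω (y j) (x (j + 1)) - apply_add_apply_swap hω (y j) (x j)
  have hdiff : polygonSum ω x p q - polygonSum ω y p q =
      ∑ j ∈ Ico p q, ω (d j) (x (j + 1) - x j) + ∑ j ∈ Ico p q, ω (d (j + 1)) (y (j + 1) - y j) -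
        (ω (d q) (y q) - ω (d p) (y p)) := by
    rw [polygonSum, polygonSum, ← sum_sub_distrib, ← sum_Ico_sub (fun j => ω (d j) (y j)) hpq,
      ← sum_add_distrib, ← sum_sub_distrib]
    exact sum_congr rfl fun j _ => hsplit j
  have hd : ∀ j ∈ Finset.Icc p q, ‖d j‖ ≤ ε := hxy
  have hA := abs_sum_apply_le (ω := ω) (Ico p q) d (fun j => x (j + 1) - x j)
    fun j hj => hd j (Ico_subset_Icc_self hj)
  have hB := abs_sum_apply_le (ω := ω) (Ico p q) (fun j => d (j + 1)) (fun j => y (j + 1) - y j)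
    fun j hj => hd (j + 1) (by rw [Finset.mem_Ico] at hj; rw [Finset.mem_Icc]; omega)
  have hT : ∀ j ∈ Finset.Icc p q, |ω (d j) (y j)| ≤ ‖ω‖ * ε * ‖y j‖ := fun j hj => by
    simpa using abs_sum_apply_le {j} d y (by simpa using hd j hj)
  rw [hdiff]
  calc _ ≤ |∑ j ∈ Ico p q, ω (d j) (x (j + 1) - x j)| +
        |∑ j ∈ Ico p q, ω (d (j + 1)) (y (j + 1) - y j)| + (|ω (d q) (y q)| + |ω (d p) (y p)|) :=
        (abs_sub _ _).trans (add_le_add (abs_add_le _ _) (abs_sub _ _))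
    _ ≤ _ := by
        linarith [hT p (left_mem_Icc.2 hpq), hT q (right_mem_Icc.2 hpq)]

end Polygon

section Partition

/-- `⟨k, t⟩` encodes the partition `a = t 0 < t 1 < ⋯ < t k = b` of `[a, b]`. -/
def IsPartition (a b : ℝ) (P : Σ k : ℕ, Fin (k + 1) → ℝ) : Prop :=
  P.2 0 = a ∧ P.2 (Fin.last P.1) = b ∧ ∀ i : Fin P.1, P.2 i.castSucc < P.2 i.succ

def finePartitions (a b δ : ℝ) : Set (Σ k : ℕ, Fin (k + 1) → ℝ) :=
  {P | IsPartition a b P ∧ ∀ i : Fin P.1, P.2 i.succ - P.2 i.castSucc < δ}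

def meshFilter (a b : ℝ) : Filter (Σ k : ℕ, Fin (k + 1) → ℝ) :=
  ⨅ δ ∈ Ioi (0 : ℝ), 𝓟 (finePartitions a b δ)

variable {a b : ℝ} {P : Σ k : ℕ, Fin (k + 1) → ℝ}

theorem IsPartition.strictMono (hP : IsPartition a b P) : StrictMono P.2 :=
  Fin.strictMono_iff_lt_succ.2 hP.2.2

theorem IsPartition.mem_Icc (hP : IsPartition a b P) (i : Fin (P.1 + 1)) : P.2 i ∈ Icc a b :=
  ⟨hP.1 ▸ hP.strictMono.monotone (Fin.zero_le i), hP.2.1 ▸ hP.strictMono.monotone (Fin.le_last i)⟩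

theorem hasBasis_meshFilter (a b : ℝ) :
    (meshFilter a b).HasBasis (fun δ => 0 < δ) (finePartitions a b) := by
  refine hasBasis_biInf_principal
    (fun δ hδ δ' hδ' => ⟨min δ δ', mem_Ioi.2 (lt_min hδ hδ'), ?_, ?_⟩) ⟨1, mem_Ioi.2 one_pos⟩ <;>
  exact fun P hP => ⟨hP.1, fun i => (hP.2 i).trans_le (by simp)⟩

theorem finePartitions_nonempty (hab : a < b) {δ : ℝ} (hδ : 0 < δ) :
    (finePartitions a b δ).Nonempty := by
  obtain ⟨k, hk⟩ := exists_nat_gt ((b - a) / δ)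
  have hk₀ : (0 : ℝ) < k := (div_pos (sub_pos.2 hab) hδ).trans hk
  have hstep : (b - a) / k < δ := by rwa [div_lt_comm₀ hk₀ hδ]
  refine ⟨⟨k, fun i => a + i * ((b - a) / k)⟩,
    ⟨by simp, by simp only [Fin.val_last]; field_simp; ring, fun i => ?_⟩, fun i => ?_⟩ <;>
    simp only [Fin.val_succ, Fin.val_castSucc, Nat.cast_add, Nat.cast_one]
  · nlinarith [div_pos (sub_pos.2 hab) hk₀]
  · linarith

theorem meshFilter_neBot (hab : a < b) : (meshFilter a b).NeBot :=
  (hasBasis_meshFilter a b).neBot_iff.2 fun hδ => finePartitions_nonempty hab hδ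

end Partition

section Curve

variable {F : Type*} [NormedAddCommGroup F] [NormedSpace ℝ F] {ω : F →L[ℝ] F →L[ℝ] ℝ}
  {a b : ℝ} {γ g : ℝ → F}

def riemannArea (ω : F →L[ℝ] F →L[ℝ] ℝ) (γ : ℝ → F) (P : Σ k : ℕ, Fin (k + 1) → ℝ) : ℝ :=
  ∑ i : Fin P.1, ω (γ (P.2 i.castSucc)) (γ (P.2 i.succ))

theorem riemannArea_eq_polygonSum (ω : F →L[ℝ] F →L[ℝ] ℝ) (γ : ℝ → F)
    (P : Σ k : ℕ, Fin (k + 1) → ℝ) :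
    riemannArea ω γ P = polygonSum ω (fun j => γ (P.2 (Fin.clamp j P.1))) 0 P.1 := by
  rw [riemannArea, polygonSum, ← Finset.range_eq_Ico, ← Fin.sum_univ_eq_sum_range]
  refine Finset.sum_congr rfl fun i _ => ?_
  have h₁ : Fin.clamp i P.1 = i.castSucc := by ext; simp
  have h₂ : Fin.clamp (i + 1) P.1 = i.succ := by ext; simp
  rw [h₁, h₂]

theorem abs_polygonSum_sub_riemannArea_le (hω : ∀ u, ω u u = 0) {δ ε : ℝ} (hε : 0 ≤ ε)
    (hmod : ∀ x ∈ Icc a b, ∀ y ∈ Icc a b, dist x y < δ → dist (γ x) (γ y) < ε)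
    (hγ : eVariationOn γ (Icc a b) ≠ ⊤) {P : Σ k : ℕ, Fin (k + 1) → ℝ}
    (hP : P ∈ finePartitions a b δ) {s : ℕ → ℝ} (hs : Monotone s) (hsab : ∀ j, s j ∈ Icc a b)
    {φ : ℕ → ℕ} (hφ : Monotone φ) (hsφ : ∀ i, s (φ i) = P.2 (Fin.clamp i P.1)) :
    |polygonSum ω (γ ∘ s) (φ 0) (φ P.1) - riemannArea ω γ P| ≤
      ‖ω‖ * ε * (eVariationOn γ (Icc a b)).toReal := by
  obtain ⟨k, t⟩ := P
  have hcomp : riemannArea ω γ ⟨k, t⟩ = polygonSum ω ((γ ∘ s) ∘ φ) 0 k := by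
    rw [riemannArea_eq_polygonSum]
    simp only [Function.comp_def, hsφ]
  rw [hcomp]
  refine (abs_polygonSum_sub_polygonSum_comp_le (ε := ε) hω (γ ∘ s) hφ k
    fun i hi j hj => ?_).trans ?_
  · rw [Finset.mem_Ico] at hj
    have hstep : s (φ (i + 1)) - s (φ i) < δ := by
      rw [hsφ, hsφ]
      convert hP.2 ⟨i, hi⟩ using 3 <;> ext <;> simp <;> omega
    rw [← dist_eq_norm]
    refine (hmod _ (hsab j) _ (hsab _) ?_).le
    rw [Real.dist_eq, abs_of_nonneg (sub_nonneg.2 (hs hj.1))]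
    linarith [hs hj.2.le]
  · gcongr
    exact sum_norm_sub_le_eVariationOn hγ hs hsab _ _

theorem abs_riemannArea_sub_riemannArea_le (hω : ∀ u, ω u u = 0) {δ ε : ℝ} (hε : 0 ≤ ε)
    (hmod : ∀ x ∈ Icc a b, ∀ y ∈ Icc a b, dist x y < δ → dist (γ x) (γ y) < ε)
    (hγ : eVariationOn γ (Icc a b) ≠ ⊤) {P P' : Σ k : ℕ, Fin (k + 1) → ℝ}
    (hP : P ∈ finePartitions a b δ) (hP' : P' ∈ finePartitions a b δ) :
    |riemannArea ω γ P - riemannArea ω γ P'| ≤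
      2 * (‖ω‖ * ε * (eVariationOn γ (Icc a b)).toReal) := by
  classical
  set R := Finset.univ.image P.2 ∪ Finset.univ.image P'.2
  have hPR : ∀ i, P.2 i ∈ R := fun i => Finset.mem_union_left _ (by simp)
  have hP'R : ∀ i, P'.2 i ∈ R := fun i => Finset.mem_union_right _ (by simp)
  have hRab : ∀ r ∈ R, r ∈ Icc a b := by
    simp only [R, Finset.mem_union, Finset.mem_image, Finset.mem_univ, true_and]
    rintro r (⟨i, rfl⟩ | ⟨i, rfl⟩)
    exacts [hP.1.mem_Icc i, hP'.1.mem_Icc i]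
  obtain ⟨s, ι, hs, hsR, hι, hsι⟩ := R.exists_monotone_enum ⟨_, hPR 0⟩
  -- `s` enumerates the common refinement of `P` and `P'`
  have hrefine : ∀ Q ∈ finePartitions a b δ, (∀ i, Q.2 i ∈ R) →
      |polygonSum ω (γ ∘ s) (ι a) (ι b) - riemannArea ω γ Q| ≤
        ‖ω‖ * ε * (eVariationOn γ (Icc a b)).toReal := by
    intro Q hQ hQR
    have hφ : Monotone fun i => ι (Q.2 (Fin.clamp i Q.1)) := fun i j hij =>
      hι (hQR _) (hQR _) (hQ.1.strictMono.monotone (Fin.clamp_monotone hij))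
    have := abs_polygonSum_sub_riemannArea_le hω hε hmod hγ hQ hs (fun j => hRab _ (hsR j)) hφ
      fun i => hsι _ (hQR _)
    have h0 : Fin.clamp 0 Q.1 = 0 := rfl
    rwa [h0, hQ.1.1, Fin.clamp_eq_last _ _ le_rfl, hQ.1.2.1] at this
  linarith [abs_sub_le (riemannArea ω γ P) (polygonSum ω (γ ∘ s) (ι a) (ι b)) (riemannArea ω γ P'),
    abs_sub_comm (riemannArea ω γ P) (polygonSum ω (γ ∘ s) (ι a) (ι b)),
    hrefine P hP hPR, hrefine P' hP' hP'R]

theorem exists_tendsto_riemannArea (hω : ∀ u, ω u u = 0) (hab : a < b)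
    (hγc : ContinuousOn γ (Icc a b)) (hγ : eVariationOn γ (Icc a b) ≠ ⊤) :
    ∃ L, Tendsto (riemannArea ω γ) (meshFilter a b) (𝓝 L) := by
  have := meshFilter_neBot hab
  refine cauchy_map_iff_exists_tendsto.1 (Metric.cauchy_iff.2 ⟨inferInstance, fun η hη => ?_⟩)
  set c := 2 * (‖ω‖ * (eVariationOn γ (Icc a b)).toReal) + 1
  have hc : 0 < c := by positivity
  obtain ⟨δ, hδ, hmod⟩ := Metric.uniformContinuousOn_iff.1
    (isCompact_Icc.uniformContinuousOn_of_continuous hγc) (η / c) (by positivity)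
  refine ⟨riemannArea ω γ '' finePartitions a b δ,
    image_mem_map ((hasBasis_meshFilter a b).mem_of_mem hδ), ?_⟩
  rintro _ ⟨P, hP, rfl⟩ _ ⟨P', hP', rfl⟩
  rw [Real.dist_eq]
  calc _ ≤ 2 * (‖ω‖ * (η / c) * (eVariationOn γ (Icc a b)).toReal) :=
        abs_riemannArea_sub_riemannArea_le hω (by positivity) hmod hγ hP hP'
    _ = η * ((c - 1) / c) := by ring
    _ < η := mul_lt_of_lt_one_right hη ((div_lt_one hc).2 (by linarith))

theorem abs_riemannArea_sub_riemannArea_le_of_norm_sub_le (hω : ∀ u, ω u u = 0)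
    (hγ : eVariationOn γ (Icc a b) ≠ ⊤) (hg : eVariationOn g (Icc a b) ≠ ⊤) {ε : ℝ}
    (hγg : ∀ x ∈ Icc a b, ‖γ x - g x‖ ≤ ε) {P : Σ k : ℕ, Fin (k + 1) → ℝ}
    (hP : IsPartition a b P) :
    |riemannArea ω γ P - riemannArea ω g P| ≤ ‖ω‖ * ε *
      ((eVariationOn γ (Icc a b)).toReal + (eVariationOn g (Icc a b)).toReal + ‖g a‖ + ‖g b‖) := by
  obtain ⟨k, t⟩ := P
  set u := fun j => t (Fin.clamp j k)
  have hu : Monotone u := hP.strictMono.monotone.comp Fin.clamp_monotone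
  have huab : ∀ j, u j ∈ Icc a b := fun j => hP.mem_Icc _
  have hu0 : u 0 = a := hP.1
  have huk : u k = b := by simp only [u, Fin.clamp_eq_last k k le_rfl]; exact hP.2.1
  have hε : 0 ≤ ε := (norm_nonneg _).trans (hγg a (hu0 ▸ huab 0))
  rw [riemannArea_eq_polygonSum, riemannArea_eq_polygonSum]
  refine (abs_polygonSum_sub_polygonSum_le hω (γ ∘ u) (g ∘ u) k.zero_le
    fun j _ => hγg _ (huab j)).trans ?_
  simp only [Function.comp_apply, hu0, huk]
  gcongr
  · exact sum_norm_sub_le_eVariationOn hγ hu huab _ _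
  · exact sum_norm_sub_le_eVariationOn hg hu huab _ _

theorem abs_sub_le_of_tendsto_riemannArea (hω : ∀ u, ω u u = 0) (hab : a < b)
    (hγ : eVariationOn γ (Icc a b) ≠ ⊤) (hg : eVariationOn g (Icc a b) ≠ ⊤) {ε : ℝ}
    (hγg : ∀ x ∈ Icc a b, ‖γ x - g x‖ ≤ ε) {L L' : ℝ}
    (hL : Tendsto (riemannArea ω γ) (meshFilter a b) (𝓝 L))
    (hL' : Tendsto (riemannArea ω g) (meshFilter a b) (𝓝 L')) :
    |L - L'| ≤ ‖ω‖ * ε *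
      ((eVariationOn γ (Icc a b)).toReal + (eVariationOn g (Icc a b)).toReal + ‖g a‖ + ‖g b‖) := by
  have := meshFilter_neBot hab
  refine le_of_tendsto (hL.sub hL').abs ?_
  filter_upwards [(hasBasis_meshFilter a b).mem_of_mem one_pos] with P hP
  exact abs_riemannArea_sub_riemannArea_le_of_norm_sub_le hω hγ hg hγg hP.1

end Curve

def sympForm (n : ℕ) : E n →L[ℝ] E n →L[ℝ] ℝ :=
  (1 / 2 : ℝ) • ∑ i : Fin n,
    ((ContinuousLinearMap.mul ℝ ℝ).bilinearComp (EuclideanSpace.proj ⟨2 * i.1, by omega⟩)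
        (EuclideanSpace.proj ⟨2 * i.1 + 1, by omega⟩) -
      (ContinuousLinearMap.mul ℝ ℝ).bilinearComp (EuclideanSpace.proj ⟨2 * i.1 + 1, by omega⟩)
        (EuclideanSpace.proj ⟨2 * i.1, by omega⟩))

theorem sympForm_apply (n : ℕ) (u v : E n) : sympForm n u v = 1 / 2 * omegaF n u v := by
  simp only [sympForm, omegaF, smul_apply, sum_apply, sub_apply,
    ContinuousLinearMap.bilinearComp_apply, ContinuousLinearMap.mul_apply', smul_eq_mul]
  congr 1
  exact Finset.sum_congr rfl fun i _ => by simp [mul_comm]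

theorem sympForm_self (n : ℕ) (u : E n) : sympForm n u u = 0 := by
  simp [sympForm_apply, omegaF, mul_comm]

theorem isSympArea_iff_tendsto {n : ℕ} {a b : ℝ} {γ : ℝ → E n} {L : ℝ} :
    IsSympArea n a b γ L ↔ Tendsto (riemannArea (sympForm n) γ) (meshFilter a b) (𝓝 L) := by
  rw [(hasBasis_meshFilter a b).tendsto_iff Metric.nhds_basis_ball]
  simp only [IsSympArea, SHat, riemannArea, sympForm_apply, ← Finset.mul_sum, finePartitions,
    IsPartition, Sigma.forall, mem_ofPred_eq, Metric.mem_ball, Real.dist_eq, and_imp, gt_iff_lt]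

theorem symp_area_uniform_limit_general (n : ℕ) (a b : ℝ) (hab : a < b)
    (γ : ℝ → E n) (γs : ℕ → ℝ → E n)
    (hcont : ContinuousOn γ (Icc a b))
    (hconts : ∀ i, ContinuousOn (γs i) (Icc a b))
    (hlen : eVariationOn γ (Icc a b) ≠ ⊤)
    (hunif : TendstoUniformlyOn γs γ atTop (Icc a b))
    (C : ℝ≥0∞) (hC : C ≠ ⊤) (hlens : ∀ i, eVariationOn (γs i) (Icc a b) ≤ C) :
    ∃ (S : ℝ) (Si : ℕ → ℝ),
      IsSympArea n a b γ S ∧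
      (∀ i, IsSympArea n a b (γs i) (Si i)) ∧
      Tendsto Si atTop (𝓝 S) := by
  simp only [isSympArea_iff_tendsto]
  have hlens' : ∀ i, eVariationOn (γs i) (Icc a b) ≠ ⊤ := fun i => ne_top_of_le_ne_top hC (hlens i)
  obtain ⟨S, hS⟩ := exists_tendsto_riemannArea (sympForm_self n) hab hcont hlen
  choose Si hSi using fun i =>
    exists_tendsto_riemannArea (sympForm_self n) hab (hconts i) (hlens' i)
  refine ⟨S, Si, hS, hSi, tendsto_of_forall_eventually_abs_sub_le (c := ‖sympForm n‖ *
    (C.toReal + (eVariationOn γ (Icc a b)).toReal + ‖γ a‖ + ‖γ b‖)) fun η hη => ?_⟩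
  filter_upwards [Metric.tendstoUniformlyOn_iff.1 hunif η hη] with i hi
  refine (abs_sub_le_of_tendsto_riemannArea (sympForm_self n) hab (hlens' i) hlen
    (fun x hx => by rw [← dist_eq_norm, dist_comm]; exact (hi x hx).le) (hSi i) hS).trans ?_
  rw [mul_right_comm]
  gcongr
  exact hlens i

/-- **Continuity of the symplectic area under uniform convergence with bounded lengths**
(Lemma 2.12(4)).  If `γᵢ → γ` uniformly on `[a,b]`, all the curves are continuous with
finite length, and `sup_i ℓ(γᵢ) < ∞`, then all the symplectic areas exist and
`S(γᵢ) → S(γ)`. -/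
theorem symp_area_uniform_limit (n : ℕ) (hn : 1 ≤ n) (a b : ℝ) (hab : a < b)
    (γ : ℝ → E n) (γs : ℕ → ℝ → E n)
    (hcont : ContinuousOn γ (Icc a b))
    (hconts : ∀ i, ContinuousOn (γs i) (Icc a b))
    (hlen : eVariationOn γ (Icc a b) ≠ ⊤)
    (hunif : TendstoUniformlyOn γs γ atTop (Icc a b))
    (C : ℝ≥0∞) (hC : C ≠ ⊤) (hlens : ∀ i, eVariationOn (γs i) (Icc a b) ≤ C) :
    ∃ (S : ℝ) (Si : ℕ → ℝ),
      IsSympArea n a b γ S ∧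
      (∀ i, IsSympArea n a b (γs i) (Si i)) ∧
      Tendsto Si atTop (𝓝 S) :=
  symp_area_uniform_limit_general n a b hab γ γs hcont hconts hlen hunif C hC hlens
end
end
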